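/- arXiv:1210.2379 — 5 statements merged into one kernel-verified Lean document; each statement's English description precedes it below -/
import Mathlib

section
/- Let X be a real Banach space with a normalized 1-symmetric basis (e_n) such that ℓ¹ does not embed isomorphically into X. Then for every ε > 0 there exists δ > 0 such that for every finite scalar family (α_i)_{i=1}^k with Σ_{i=1}^k |α_i| ≤ 1 and max_{i≤k} |α_i| ≤ δ one has ‖Σ_{i=1}^k α_i e_i‖_X < ε. -/
/-!
Let `φ n = ‖e 0 + ⋯ + e (n - 1)‖`. Averaging the `n` cyclic shifts of `∑ bᵢ eᵢ` with `bᵢ ≥ 0`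
gives `(∑ bᵢ) φ n ≤ n ‖∑ bᵢ eᵢ‖`, so if `φ n ≥ c n` for all `n` the basis would span `ℓ¹`;
hence `φ m < (ε / 2) m` for some `m`. Arrange the `|αᵢ|` decreasingly and cut them into blocks
of length `m`. By 1-unconditionality a block has norm at most its first coefficient times
`φ m`, and the first coefficient of a block is at most the mean of the previous block, so
`‖∑ αᵢ eᵢ‖ ≤ (maxᵢ |αᵢ| + (∑ |αᵢ|) / m) φ m < ε` as soon as `maxᵢ |αᵢ| ≤ ε / (2 φ m)`.
-/

open MeasureTheory

noncomputable section

/-- `e` is a normalized 1-symmetric (Schauder) basis of `X`: each `e n` has norm one,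
its linear span is dense, and the norm of finite linear combinations is invariant under
permutations of the indices and changes of signs of the coefficients. -/
def IsSymmetricBasis {X : Type*} [NormedAddCommGroup X] [NormedSpace ℝ X] (e : ℕ → X) : Prop :=
  (∀ n, ‖e n‖ = 1) ∧
  Dense (Submodule.span ℝ (Set.range e) : Set X) ∧
  ∀ (a : ℕ →₀ ℝ) (π : Equiv.Perm ℕ) (ε : ℕ → ℝ), (∀ n, ε n = 1 ∨ ε n = -1) →
    ‖a.sum fun n c => (ε n * c) • e (π n)‖ = ‖a.sum fun n c => c • e n‖

theorem norm_smul_add_le_of_norm_neg_add_eq {E : Type*} [SeminormedAddCommGroup E]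
    [NormedSpace ℝ E] {u v : E} (huv : ‖-u + v‖ = ‖u + v‖) {t : ℝ} (ht : |t| ≤ 1) :
    ‖t • u + v‖ ≤ ‖u + v‖ := by
  obtain ⟨ht₁, ht₂⟩ := abs_le.mp ht
  have hcomb : t • u + v = ((1 + t) / 2) • (u + v) + ((1 - t) / 2) • (-u + v) := by module
  calc ‖t • u + v‖ ≤ ‖((1 + t) / 2) • (u + v)‖ + ‖((1 - t) / 2) • (-u + v)‖ :=
        hcomb ▸ norm_add_le _ _
    _ = ‖u + v‖ := by
        rw [norm_smul, norm_smul, huv, Real.norm_of_nonneg (by linarith),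
          Real.norm_of_nonneg (by linarith)]
        ring

def fundamentalFunction {X : Type*} [NormedAddCommGroup X] (e : ℕ → X) (n : ℕ) : ℝ :=
  ‖∑ i ∈ Finset.range n, e i‖

def decreasingRearrangement {k : ℕ} (α : Fin k → ℝ) (i : ℕ) : ℝ :=
  if h : i < k then |α (Tuple.sort (fun j => -|α j|) ⟨i, h⟩)| else 0

section DecreasingRearrangement

variable {k : ℕ} (α : Fin k → ℝ)

theorem decreasingRearrangement_nonneg (i : ℕ) : 0 ≤ decreasingRearrangement α i := by
  unfold decreasingRearrangement
  split_ifs <;> simp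

theorem decreasingRearrangement_antitone : Antitone (decreasingRearrangement α) := by
  intro i j hij
  unfold decreasingRearrangement
  by_cases hj : j < k
  · rw [dif_pos hj, dif_pos (hij.trans_lt hj)]
    simpa using Tuple.monotone_sort (fun j => -|α j|) (show (⟨i, _⟩ : Fin k) ≤ ⟨j, hj⟩ from hij)
  · rw [dif_neg hj]
    split_ifs <;> simp

theorem decreasingRearrangement_le {t : ℝ} (ht : 0 ≤ t) (hα : ∀ i, |α i| ≤ t) (i : ℕ) :
    decreasingRearrangement α i ≤ t := by
  unfold decreasingRearrangement
  split_ifs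
  exacts [hα _, ht]

theorem sum_decreasingRearrangement :
    ∑ i ∈ Finset.range k, decreasingRearrangement α i = ∑ i, |α i| := by
  rw [← Fin.sum_univ_eq_sum_range]
  simp only [decreasingRearrangement, Fin.is_lt, dif_pos, Fin.eta]
  exact Equiv.sum_comp _ fun j => |α j|

end DecreasingRearrangement

namespace IsSymmetricBasis

variable {X : Type*} [NormedAddCommGroup X] [NormedSpace ℝ X] {e : ℕ → X}

theorem norm_sum_eq_of_injective (he : IsSymmetricBasis e) {ι : Type*} [Fintype ι]
    {f g : ι → ℕ} (hf : f.Injective) (hg : g.Injective) {c d : ι → ℝ}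
    (hcd : ∀ i, |c i| = |d i|) :
    ‖∑ i, c i • e (f i)‖ = ‖∑ i, d i • e (g i)‖ := by
  classical
  obtain ⟨π, hπ⟩ := Equiv.Perm.exists_extending_pair f g hf hg
  set ε : ι → ℝ := fun i => if d i = c i then 1 else -1
  have hdc : ∀ i, ε i * c i = d i := fun i => by
    by_cases h : d i = c i
    · simp [ε, h]
    · rw [show ε i = -1 from if_neg h, (abs_eq_abs.mp (hcd i)).resolve_left (Ne.symm h)]
      ring
  have hε : ∀ n, Function.extend f ε 1 n = 1 ∨ Function.extend f ε 1 n = -1 := fun n => by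
    by_cases hn : ∃ i, f i = n
    · obtain ⟨i, rfl⟩ := hn
      rw [hf.extend_apply]
      exact ite_eq_or_eq _ _ _
    · exact .inl (Function.extend_apply' _ _ _ hn)
  have := he.2.2 (Finsupp.mapDomain f (Finsupp.equivFunOnFinite.symm c)) π _ hε
  rw [Finsupp.sum_mapDomain_index_inj hf, Finsupp.sum_mapDomain_index_inj hf,
    Finsupp.sum_fintype _ _ (by simp), Finsupp.sum_fintype _ _ (by simp)] at this
  simpa [hf.extend_apply, hπ, hdc] using this.symm

theorem norm_sum_eq_of_injOn (he : IsSymmetricBasis e) {ι : Type*} {s : Finset ι}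
    {f g : ι → ℕ} (hf : Set.InjOn f s) (hg : Set.InjOn g s) {c d : ι → ℝ}
    (hcd : ∀ i ∈ s, |c i| = |d i|) :
    ‖∑ i ∈ s, c i • e (f i)‖ = ‖∑ i ∈ s, d i • e (g i)‖ := by
  rw [← s.sum_coe_sort, ← s.sum_coe_sort]
  exact he.norm_sum_eq_of_injective (Set.injOn_iff_injective.mp hf)
    (Set.injOn_iff_injective.mp hg) fun i => hcd i i.2

theorem norm_sum_update_le (he : IsSymmetricBasis e) {s : Finset ℕ} {w : ℕ → ℝ} {j : ℕ}
    (hj : j ∈ s) {x : ℝ} (hx : |x| ≤ |w j|) :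
    ‖∑ i ∈ s, Function.update w j x i • e i‖ ≤ ‖∑ i ∈ s, w i • e i‖ := by
  set V := ∑ i ∈ s \ {j}, w i • e i
  have hsplit : ∀ y, ∑ i ∈ s, Function.update w j y i • e i = y • e j + V := fun y => by
    simp_rw [Function.apply_update (fun i c => c • e i)]
    exact Finset.sum_update_of_mem hj _ _
  have hflip : ‖-(w j • e j) + V‖ = ‖w j • e j + V‖ := by
    rw [← neg_smul, ← hsplit, ← hsplit]
    refine he.norm_sum_eq_of_injOn (Set.injOn_id _) (Set.injOn_id _) fun i _ => ?_
    by_cases h : i = j <;> simp [h]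
  obtain ⟨t, ht, rfl⟩ : ∃ t, |t| ≤ 1 ∧ t * w j = x := by
    by_cases hw : w j = 0
    · exact ⟨0, by simp, by simpa [hw, eq_comm] using hx⟩
    · exact ⟨x / w j, by rw [abs_div]; exact div_le_one_of_le₀ hx (abs_nonneg _),
        div_mul_cancel₀ _ hw⟩
  calc ‖∑ i ∈ s, Function.update w j (t * w j) i • e i‖ = ‖t • (w j • e j) + V‖ := by
        rw [hsplit, mul_smul]
    _ ≤ ‖w j • e j + V‖ := norm_smul_add_le_of_norm_neg_add_eq hflip ht
    _ = ‖∑ i ∈ s, w i • e i‖ := by rw [← hsplit, Function.update_eq_self]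

theorem norm_sum_le_of_abs_le (he : IsSymmetricBasis e) {s : Finset ℕ} {a b : ℕ → ℝ}
    (hab : ∀ i ∈ s, |a i| ≤ |b i|) : ‖∑ i ∈ s, a i • e i‖ ≤ ‖∑ i ∈ s, b i • e i‖ := by
  have key : ‖∑ i ∈ s, s.piecewise a b i • e i‖ ≤ ‖∑ i ∈ s, b i • e i‖ := by
    refine Finset.induction_on' (motive := fun t => ‖∑ i ∈ s, t.piecewise a b i • e i‖ ≤ _) s
      (by rw [Finset.piecewise_empty]) fun j t hj _ hjt ih => ?_
    rw [Finset.piecewise_insert]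
    refine (he.norm_sum_update_le hj ?_).trans ih
    rw [Finset.piecewise_eq_of_notMem _ _ _ hjt]
    exact hab j hj
  rwa [Finset.sum_congr rfl fun i hi => by rw [Finset.piecewise_eq_of_mem _ _ _ hi]] at key

theorem norm_sum_range_le (he : IsSymmetricBasis e) {n : ℕ} {a : ℕ → ℝ} {t : ℝ} (ht : 0 ≤ t)
    (hat : ∀ i < n, |a i| ≤ t) :
    ‖∑ i ∈ Finset.range n, a i • e i‖ ≤ t * fundamentalFunction e n :=
  calc ‖∑ i ∈ Finset.range n, a i • e i‖ ≤ ‖∑ i ∈ Finset.range n, t • e i‖ :=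
        he.norm_sum_le_of_abs_le fun i hi =>
          (hat i (Finset.mem_range.mp hi)).trans (le_abs_self t)
    _ = t * fundamentalFunction e n := by
        rw [← Finset.smul_sum, norm_smul, Real.norm_of_nonneg ht, fundamentalFunction]

theorem fundamentalFunction_mono (he : IsSymmetricBasis e) : Monotone (fundamentalFunction e) := by
  intro n m hnm
  have hind : ∑ i ∈ Finset.range m, (if i < n then 1 else 0 : ℝ) • e i
      = ∑ i ∈ Finset.range n, e i := by
    simp only [ite_smul, one_smul, zero_smul, Finset.sum_ite, Finset.sum_const_zero, add_zero]
    congr 1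
    ext i
    simp only [Finset.mem_filter, Finset.mem_range]
    omega
  have := he.norm_sum_range_le (n := m) (a := fun i => if i < n then 1 else 0) zero_le_one
    fun i _ => by split_ifs <;> simp
  rwa [hind, one_mul] at this

theorem fundamentalFunction_one (he : IsSymmetricBasis e) : fundamentalFunction e 1 = 1 := by
  simp [fundamentalFunction, he.1 0]

theorem sum_mul_fundamentalFunction_le (he : IsSymmetricBasis e) {n : ℕ} [NeZero n]
    {b : Fin n → ℝ} (hb : ∀ i, 0 ≤ b i) :
    (∑ i, b i) * fundamentalFunction e n ≤ n * ‖∑ i, b i • e i‖ := by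
  have hrot : ∀ k : Fin n, ‖∑ i, b i • e ↑(i + k)‖ = ‖∑ i, b i • e i‖ := fun k =>
    he.norm_sum_eq_of_injOn (Fin.val_injective.comp (add_left_injective k)).injOn
      Fin.val_injective.injOn fun _ _ => rfl
  have hsum : ∑ k : Fin n, ∑ i, b i • e ↑(i + k) = (∑ i, b i) • ∑ i ∈ Finset.range n, e i := by
    rw [Finset.sum_comm, Finset.sum_smul, ← Fin.sum_univ_eq_sum_range]
    refine Finset.sum_congr rfl fun i _ => ?_
    rw [← Finset.smul_sum]
    exact congrArg _ (Equiv.sum_comp (Equiv.addLeft i) fun j : Fin n => e j)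
  calc (∑ i, b i) * fundamentalFunction e n = ‖∑ k : Fin n, ∑ i, b i • e ↑(i + k)‖ := by
        rw [hsum, norm_smul, Real.norm_of_nonneg (Finset.sum_nonneg fun i _ => hb i),
          fundamentalFunction]
    _ ≤ ∑ k : Fin n, ‖∑ i, b i • e ↑(i + k)‖ := norm_sum_le _ _
    _ = n * ‖∑ i, b i • e i‖ := by simp [hrot]

theorem mul_sum_abs_le_norm_sum (he : IsSymmetricBasis e) {c : ℝ}
    (hc : ∀ n, 0 < n → c * n ≤ fundamentalFunction e n) (a : ℕ → ℝ) (n : ℕ) :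
    c * ∑ i ∈ Finset.range n, |a i| ≤ ‖∑ i ∈ Finset.range n, a i • e i‖ := by
  rcases n.eq_zero_or_pos with rfl | hn
  · simp
  have : NeZero n := ⟨hn.ne'⟩
  have hsign : ‖∑ i ∈ Finset.range n, a i • e i‖ = ‖∑ i : Fin n, |a i| • e i‖ := by
    rw [← Fin.sum_univ_eq_sum_range (fun i => a i • e i)]
    exact he.norm_sum_eq_of_injOn Fin.val_injective.injOn Fin.val_injective.injOn
      fun i _ => (abs_abs _).symm
  have hcyc := he.sum_mul_fundamentalFunction_le (b := fun i : Fin n => |a i|) fun _ => abs_nonneg _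
  rw [Fin.sum_univ_eq_sum_range (fun i => |a i|)] at hcyc
  have hS : 0 ≤ ∑ i ∈ Finset.range n, |a i| := Finset.sum_nonneg fun i _ => abs_nonneg _
  have hn' : (0 : ℝ) < n := by exact_mod_cast hn
  rw [hsign]
  refine le_of_mul_le_mul_right ?_ hn'
  nlinarith [mul_le_mul_of_nonneg_left (hc n hn) hS]

theorem exists_fundamentalFunction_lt (he : IsSymmetricBasis e)
    (hl1 : ¬ ∃ (x : ℕ → X) (c C : ℝ), 0 < c ∧ c ≤ C ∧
        ∀ a : ℕ →₀ ℝ,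
          c * (a.sum fun _ t => |t|) ≤ ‖a.sum fun n t => t • x n‖ ∧
          ‖a.sum fun n t => t • x n‖ ≤ C * (a.sum fun _ t => |t|))
    {c : ℝ} (hc : 0 < c) : ∃ n, 0 < n ∧ fundamentalFunction e n < c * n := by
  by_contra! h
  refine hl1 ⟨e, min c 1, 1, lt_min hc one_pos, min_le_right _ _, fun a => ?_⟩
  obtain ⟨N, hN⟩ := a.support.exists_nat_subset_range
  rw [Finsupp.sum_of_support_subset a hN (fun n t => t • e n) fun _ _ => zero_smul ℝ _,
    Finsupp.sum_of_support_subset a hN (fun _ t => |t|) fun _ _ => abs_zero]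
  constructor
  · calc min c 1 * ∑ i ∈ Finset.range N, |a i| ≤ c * ∑ i ∈ Finset.range N, |a i| :=
          mul_le_mul_of_nonneg_right (min_le_left _ _) (Finset.sum_nonneg fun i _ => abs_nonneg _)
      _ ≤ _ := he.mul_sum_abs_le_norm_sum h a N
  · calc ‖∑ i ∈ Finset.range N, a i • e i‖ ≤ ∑ i ∈ Finset.range N, ‖a i • e i‖ := norm_sum_le _ _
      _ = 1 * ∑ i ∈ Finset.range N, |a i| := by simp [norm_smul, he.1]

theorem norm_sum_range_le_of_antitone (he : IsSymmetricBasis e) {m : ℕ} (hm : 0 < m)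
    {a : ℕ → ℝ} (ha : Antitone a) (ha0 : ∀ i, 0 ≤ a i) (n : ℕ) :
    ‖∑ i ∈ Finset.range n, a i • e i‖
      ≤ (a 0 + (∑ i ∈ Finset.range n, a i) / m) * fundamentalFunction e m := by
  induction n using Nat.strong_induction_on generalizing a with
  | _ n ih =>
    have hm' : (0 : ℝ) < m := by exact_mod_cast hm
    have hhead : ∀ n, ‖∑ i ∈ Finset.range n, a i • e i‖ ≤ a 0 * fundamentalFunction e n :=
      fun n => he.norm_sum_range_le (ha0 0) fun i _ => by
        rw [abs_of_nonneg (ha0 i)]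
        exact ha (Nat.zero_le i)
    rcases le_or_gt n m with hnm | hmn
    · have hS : 0 ≤ (∑ i ∈ Finset.range n, a i) / m :=
        div_nonneg (Finset.sum_nonneg fun i _ => ha0 i) hm'.le
      calc ‖∑ i ∈ Finset.range n, a i • e i‖ ≤ a 0 * fundamentalFunction e m :=
            (hhead n).trans (mul_le_mul_of_nonneg_left (he.fundamentalFunction_mono hnm) (ha0 0))
        _ ≤ _ := by gcongr; exacts [norm_nonneg _, le_add_of_nonneg_right hS]
    obtain ⟨n, rfl⟩ := Nat.exists_eq_add_of_le hmn.le
    have htail := ih n (by omega) (a := fun i => a (m + i))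
      (ha.comp_monotone fun _ _ h => Nat.add_le_add_left h m) fun i => ha0 _
    have hshift : ‖∑ i ∈ Finset.range n, a (m + i) • e (m + i)‖
        = ‖∑ i ∈ Finset.range n, a (m + i) • e i‖ :=
      he.norm_sum_eq_of_injOn (add_right_injective m).injOn (Set.injOn_id _) fun _ _ => rfl
    have hmean : a m ≤ (∑ i ∈ Finset.range m, a i) / m := by
      have := Finset.card_nsmul_le_sum (Finset.range m) a (a m) fun i hi =>
        ha (Finset.mem_range.mp hi).le
      rw [Finset.card_range, nsmul_eq_mul] at this
      rwa [le_div_iff₀ hm', mul_comm]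
    rw [Finset.sum_range_add, Finset.sum_range_add]
    calc _ ≤ ‖∑ i ∈ Finset.range m, a i • e i‖ + ‖∑ i ∈ Finset.range n, a (m + i) • e (m + i)‖ :=
          norm_add_le _ _
      _ ≤ a 0 * fundamentalFunction e m
            + (a m + (∑ i ∈ Finset.range n, a (m + i)) / m) * fundamentalFunction e m := by
          rw [hshift]
          simpa using add_le_add (hhead m) htail
      _ ≤ _ := by
          rw [← add_mul, add_div]
          gcongr
          exact norm_nonneg _

theorem norm_sum_decreasingRearrangement (he : IsSymmetricBasis e) {k : ℕ} (α : Fin k → ℝ) :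
    ‖∑ i ∈ Finset.range k, decreasingRearrangement α i • e i‖ = ‖∑ i, α i • e i‖ := by
  set σ := Tuple.sort fun j => -|α j|
  rw [← Fin.sum_univ_eq_sum_range (fun i => decreasingRearrangement α i • e i),
    ← Equiv.sum_comp σ fun i => α i • e i]
  simp only [decreasingRearrangement, Fin.is_lt, dif_pos, Fin.eta]
  exact he.norm_sum_eq_of_injOn Fin.val_injective.injOn
    (Fin.val_injective.comp σ.injective).injOn fun i _ => abs_abs _

end IsSymmetricBasis

theorem small_coeff_small_norm_of_no_ell_one_general
    {X : Type*} [NormedAddCommGroup X] [NormedSpace ℝ X]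
    (e : ℕ → X) (he : IsSymmetricBasis e)
    (hl1 : ¬ ∃ (x : ℕ → X) (c C : ℝ), 0 < c ∧ c ≤ C ∧
        ∀ a : ℕ →₀ ℝ,
          c * (a.sum fun _ t => |t|) ≤ ‖a.sum fun n t => t • x n‖ ∧
          ‖a.sum fun n t => t • x n‖ ≤ C * (a.sum fun _ t => |t|)) :
    ∀ ε > (0 : ℝ), ∃ δ > (0 : ℝ), ∀ (k : ℕ) (α : Fin k → ℝ),
      (∑ i, |α i|) ≤ 1 → (∀ i, |α i| ≤ δ) →
      ‖∑ i : Fin k, α i • e (i : ℕ)‖ < ε := by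
  intro ε hε
  obtain ⟨m, hm, hφm⟩ := he.exists_fundamentalFunction_lt hl1 (half_pos hε)
  have hm' : (0 : ℝ) < m := by exact_mod_cast hm
  have hφ : 0 < fundamentalFunction e m :=
    one_pos.trans_le (he.fundamentalFunction_one ▸ he.fundamentalFunction_mono hm)
  refine ⟨ε / (2 * fundamentalFunction e m), by positivity, fun k α hsum hmax => ?_⟩
  set a := decreasingRearrangement α
  calc ‖∑ i, α i • e i‖ = ‖∑ i ∈ Finset.range k, a i • e i‖ :=
        (he.norm_sum_decreasingRearrangement α).symm
    _ ≤ (a 0 + (∑ i ∈ Finset.range k, a i) / m) * fundamentalFunction e m :=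
        he.norm_sum_range_le_of_antitone hm (decreasingRearrangement_antitone α)
          (decreasingRearrangement_nonneg α) k
    _ ≤ (ε / (2 * fundamentalFunction e m) + 1 / m) * fundamentalFunction e m := by
        gcongr
        · exact decreasingRearrangement_le α (by positivity) hmax 0
        · exact (sum_decreasingRearrangement α).trans_le hsum
    _ = ε / 2 + fundamentalFunction e m / m := by field_simp
    _ < ε := by linarith [(div_lt_iff₀ hm').mpr hφm]

/-- If `X` is a real Banach space with a normalized 1-symmetric basis
`(e_n)` and `ℓ¹` does not embed isomorphically into `X`, then for every `ε > 0` there is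
`δ > 0` such that `‖Σ_{i<k} α_i e_i‖ < ε` whenever `Σ_{i<k} |α_i| ≤ 1` and
`max_i |α_i| ≤ δ`. -/
theorem small_coeff_small_norm_of_no_ell_one
    {X : Type*} [NormedAddCommGroup X] [NormedSpace ℝ X] [CompleteSpace X]
    (e : ℕ → X) (he : IsSymmetricBasis e)
    (hl1 : ¬ ∃ (x : ℕ → X) (c C : ℝ), 0 < c ∧ c ≤ C ∧
        ∀ a : ℕ →₀ ℝ,
          c * (a.sum fun _ t => |t|) ≤ ‖a.sum fun n t => t • x n‖ ∧
          ‖a.sum fun n t => t • x n‖ ≤ C * (a.sum fun _ t => |t|)) :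
    ∀ ε > (0 : ℝ), ∃ δ > (0 : ℝ), ∀ (k : ℕ) (α : Fin k → ℝ),
      (∑ i, |α i|) ≤ 1 → (∀ i, |α i| ≤ δ) →
      ‖∑ i : Fin k, α i • e (i : ℕ)‖ < ε :=
  small_coeff_small_norm_of_no_ell_one_general e he hl1

end
end

section
/- Let X be a real Banach space with a normalized 1-symmetric basis (e_n). Let f ∈ L¹(0,1) and let P₀ = {0 = t_0 < t_1 < … < t_n = 1} be a partition of [0,1] such that f is constant on each interval (t_{i−1}, t_i). Then for every partition Q = {I_j}_{j=1}^m of [0,1] into finitely many pairwise disjoint intervals there exists a partition P of [0,1] into intervals whose endpoints all belong to P₀ such that τ(Q,f) ≤ τ(P,f), where for a partition {J_l} into intervals τ({J_l}, f) = ‖Σ_l (∫_{J_l} f dμ) e_l‖_X. -/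
/-!
Write `Φ` for a primitive of `f`; then `τ` of a partition `s₀ < ⋯ < s_m` is the norm of
`∑ⱼ (Φ sⱼ₊₁ - Φ sⱼ) • eⱼ`. Take a point `s_a` that is not a knot of `P₀` and move it inside the
interval cut out by its two neighbours and the two knots around it. Only the coefficients of
`e_{a-1}` and `e_a` change, by `±Φ x`, and `Φ` is affine between knots, so the norm is a convex
function of the position `x` and does not decrease at one of the two ends. There the point either
becomes a knot or collides with a neighbour; a collision produces a zero coefficient, which
`1`-symmetry lets us delete together with the point. Either way the number of points off the
knots drops, and induction on it ends with a partition by knots.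
-/

open MeasureTheory

noncomputable section

open Function Set

def succAboveNat (k j : ℕ) : ℕ := if j < k then j else j + 1

lemma succAboveNat_strictMono (k : ℕ) : StrictMono (succAboveNat k) := by
  intro i j h
  unfold succAboveNat
  split_ifs <;> omega

lemma succAboveNat_ne (k j : ℕ) : succAboveNat k j ≠ k := by
  unfold succAboveNat
  split_ifs <;> omega

lemma Finset.sum_range_succ_eq_add_sum_succAboveNat {M : Type*} [AddCommMonoid M] (g : ℕ → M)
    {k m : ℕ} (hk : k ≤ m) :
    ∑ j ∈ Finset.range (m + 1), g j = g k + ∑ j ∈ Finset.range m, g (succAboveNat k j) := by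
  rw [← Finset.add_sum_erase _ _ (Finset.mem_range.2 (Nat.lt_succ_of_le hk))]
  congr 1
  refine (Finset.sum_nbij' (succAboveNat k) (fun j => if j < k then j else j - 1)
    ?_ ?_ ?_ ?_ fun _ _ => rfl).symm <;>
  · intro j
    simp only [Finset.mem_range, Finset.mem_erase, succAboveNat]
    split_ifs <;> omega

namespace IsSymmetricBasis

variable {X : Type*} [NormedAddCommGroup X] [NormedSpace ℝ X] {e : ℕ → X}

lemma norm_sum_comp_perm (he : IsSymmetricBasis e) (S : Finset ℕ) (c : ℕ → ℝ)
    (π : Equiv.Perm ℕ) : ‖∑ j ∈ S, c j • e (π j)‖ = ‖∑ j ∈ S, c j • e j‖ := by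
  classical
  have key := he.2.2 (∑ j ∈ S, Finsupp.single j (c j)) π 1 (fun _ => Or.inl rfl)
  simp only [Pi.one_apply, one_mul] at key
  rwa [← Finsupp.sum_finsetSum_index (fun i => zero_smul ℝ (e (π i))) fun _ _ _ => add_smul _ _ _,
    ← Finsupp.sum_finsetSum_index (fun i => zero_smul ℝ (e i)) fun _ _ _ => add_smul _ _ _,
    Finset.sum_congr rfl fun j _ => Finsupp.sum_single_index (zero_smul ℝ (e (π j))),
    Finset.sum_congr rfl fun j _ => Finsupp.sum_single_index (zero_smul ℝ (e j))] at key

lemma norm_sum_comp_of_injOn (he : IsSymmetricBasis e) (S : Finset ℕ) (c : ℕ → ℝ)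
    {σ : ℕ → ℕ} (hσ : InjOn σ S) : ‖∑ j ∈ S, c j • e (σ j)‖ = ‖∑ j ∈ S, c j • e j‖ := by
  classical
  have : Finite {j | j ∈ (S : Set ℕ)} := S.finite_toSet.to_subtype
  let π : Equiv.Perm ℕ := (hσ.bijOn_image.equiv σ).extendSubtype
  have hπ : ∀ j ∈ S, π j = σ j := fun j hj =>
    Equiv.extendSubtype_apply_of_mem _ j (Finset.mem_coe.2 hj)
  rw [← he.norm_sum_comp_perm S c π]
  exact congrArg _ (Finset.sum_congr rfl fun j hj => by rw [hπ j hj])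

lemma norm_sum_succAboveNat (he : IsSymmetricBasis e) {b : ℕ → ℝ} {k m : ℕ} (hk : k ≤ m)
    (hbk : b k = 0) :
    ‖∑ j ∈ Finset.range m, b (succAboveNat k j) • e j‖ =
      ‖∑ j ∈ Finset.range (m + 1), b j • e j‖ := by
  rw [Finset.sum_range_succ_eq_add_sum_succAboveNat _ hk, hbk, zero_smul, zero_add,
    he.norm_sum_comp_of_injOn _ _ (succAboveNat_strictMono k).injective.injOn]

end IsSymmetricBasis

section Increments

variable {X : Type*} [NormedAddCommGroup X] [NormedSpace ℝ X]

/-- For a primitive `Φ` of `f`, the norm of this vector is `τ` of the partition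
`s 0 < s 1 < ⋯ < s m`. -/
def incrSum (e : ℕ → X) (Φ : ℝ → ℝ) (s : ℕ → ℝ) (m : ℕ) : X :=
  ∑ j ∈ Finset.range m, (Φ (s (j + 1)) - Φ (s j)) • e j

variable {e : ℕ → X} {Φ : ℝ → ℝ}

lemma incrSum_congr {s s' : ℕ → ℝ} {m : ℕ} (h : EqOn s s' (Iic m)) :
    incrSum e Φ s m = incrSum e Φ s' m :=
  Finset.sum_congr rfl fun j hj => by
    rw [Finset.mem_range] at hj
    rw [h (show j + 1 ≤ m by omega), h (show j ≤ m by omega)]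

lemma incrSum_update (s : ℕ → ℝ) {k m : ℕ} (hk : k + 1 < m) (x : ℝ) :
    incrSum e Φ (update s (k + 1) x) m =
      incrSum e Φ s m + (Φ x - Φ (s (k + 1))) • (e k - e (k + 1)) := by
  classical
  have hterm : ∀ j, (Φ (update s (k + 1) x (j + 1)) - Φ (update s (k + 1) x j)) • e j =
      (Φ (s (j + 1)) - Φ (s j)) • e j + (if j = k then (Φ x - Φ (s (k + 1))) • e k else 0)
        - (if j = k + 1 then (Φ x - Φ (s (k + 1))) • e (k + 1) else 0) := by
    intro j
    rcases lt_trichotomy j k with h | rfl | h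
    · simp [h.ne, show j ≠ k + 1 by omega]
    · simp only [update_apply, if_pos, if_neg (show j ≠ j + 1 by omega)]
      module
    · rcases eq_or_ne j (k + 1) with rfl | h'
      · simp only [update_apply, if_pos, if_neg (show k + 1 + 1 ≠ k + 1 by omega),
          if_neg (show k + 1 ≠ k by omega)]
        module
      · simp [h.ne', h']
  simp only [incrSum, hterm, Finset.sum_sub_distrib, Finset.sum_add_distrib, Finset.sum_ite_eq',
    Finset.mem_range, if_pos hk, if_pos (show k < m by omega)]
  module

lemma update_comp_succAboveNat (s : ℕ → ℝ) (k : ℕ) (x : ℝ) :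
    update s k x ∘ succAboveNat k = s ∘ succAboveNat k :=
  funext fun j => update_of_ne (succAboveNat_ne k j) _ _

lemma comp_succAboveNat_succ_of_eq {r : ℕ → ℝ} {k : ℕ} (h : r k = r (k + 1)) :
    r ∘ succAboveNat (k + 1) = r ∘ succAboveNat k := by
  funext j
  simp only [comp_apply, succAboveNat]
  split_ifs
  · rfl
  · rw [show j = k by omega, h]
  · omega
  · rfl

lemma IsSymmetricBasis.norm_incrSum_comp_succAboveNat (he : IsSymmetricBasis e) {r : ℕ → ℝ}
    {k m : ℕ} (hk : k ≤ m) (h : r k = r (k + 1)) :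
    ‖incrSum e Φ (r ∘ succAboveNat (k + 1)) m‖ = ‖incrSum e Φ r (m + 1)‖ := by
  rw [comp_succAboveNat_succ_of_eq h, incrSum, incrSum,
    ← he.norm_sum_succAboveNat (b := fun j => Φ (r (j + 1)) - Φ (r j)) hk (by simp [h])]
  congr 1
  refine Finset.sum_congr rfl fun j _ => ?_
  simp only [comp_apply, succAboveNat]
  split_ifs <;> first | rfl | rw [show j + 1 = k by omega, h]

end Increments

lemma norm_add_smul_le_max {X : Type*} [NormedAddCommGroup X] [NormedSpace ℝ X]
    {Φ : ℝ → ℝ} {l r c d : ℝ} (hΦ : EqOn Φ (fun x => c * x + d) (Icc l r)) (v w : X)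
    {L R x : ℝ} (hL : L ∈ Icc l r) (hR : R ∈ Icc l r) (hx : x ∈ Icc L R) :
    ‖v + Φ x • w‖ ≤ max ‖v + Φ L • w‖ ‖v + Φ R • w‖ := by
  have hconv : ConvexOn ℝ (Icc l r) fun x => ‖v + Φ x • w‖ :=
    (((convexOn_norm convex_univ).comp_affineMap
      (AffineMap.lineMap (v + d • w) (v + (c + d) • w))).subset (subset_univ _)
      (convex_Icc l r)).congr fun x hx => by
        simp only [comp_apply, AffineMap.lineMap_apply_module', hΦ hx]
        congr 1
        module
  exact hconv.le_max_of_mem_Icc hL hR hx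

structure IsPartition (lo hi : ℝ) (s : ℕ → ℝ) (m : ℕ) : Prop where
  strictMonoOn : StrictMonoOn s (Iic m)
  first_eq : s 0 = lo
  last_eq : s m = hi

namespace IsPartition

variable {lo hi : ℝ} {s : ℕ → ℝ} {m : ℕ}

lemma update (hs : IsPartition lo hi s m) {k : ℕ} (hk : k + 2 ≤ m) {x : ℝ}
    (hx : x ∈ Ioo (s k) (s (k + 2))) : IsPartition lo hi (update s (k + 1) x) m where
  strictMonoOn i hi' j hj' hij := by
    simp only [mem_Iic] at hi' hj'
    rcases eq_or_ne i (k + 1) with rfl | hik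
    · rw [update_self, update_of_ne (by omega)]
      exact hx.2.trans_le (hs.strictMonoOn.monotoneOn (by simp; omega) hj' (by omega))
    rcases eq_or_ne j (k + 1) with rfl | hjk
    · rw [update_self, update_of_ne hik]
      exact (hs.strictMonoOn.monotoneOn hi' (by simp; omega) (by omega)).trans_lt hx.1
    · rw [update_of_ne hik, update_of_ne hjk]
      exact hs.strictMonoOn hi' hj' hij
  first_eq := by rw [update_of_ne (by omega), hs.first_eq]
  last_eq := by rw [update_of_ne (by omega), hs.last_eq]

lemma comp_succAboveNat (hs : IsPartition lo hi s (m + 1)) {k : ℕ} (hk₀ : 0 < k) (hkm : k ≤ m) :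
    IsPartition lo hi (s ∘ succAboveNat k) m where
  strictMonoOn := hs.strictMonoOn.comp ((succAboveNat_strictMono k).strictMonoOn _) fun j hj => by
    simp only [mem_Iic, succAboveNat] at hj ⊢
    split_ifs <;> omega
  first_eq := by simp [succAboveNat, hk₀, hs.first_eq]
  last_eq := by simp [succAboveNat, show ¬ m < k by omega, hs.last_eq]

end IsPartition

open Classical in
def badIdx (A : Set ℝ) (s : ℕ → ℝ) (m : ℕ) : Finset ℕ :=
  (Finset.range (m + 1)).filter (s · ∉ A)

lemma card_badIdx_lt {A : Set ℝ} {s s' : ℕ → ℝ} {m m' a : ℕ} {g : ℕ → ℕ} (hg : Injective g)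
    (ha : a ≤ m) (hsa : s a ∉ A)
    (hmap : ∀ j ≤ m', s' j ∉ A → g j ≤ m ∧ g j ≠ a ∧ s (g j) ∉ A) :
    (badIdx A s' m').card < (badIdx A s m).card := by
  classical
  calc (badIdx A s' m').card = ((badIdx A s' m').image g).card :=
        (Finset.card_image_of_injective _ hg).symm
    _ ≤ ((badIdx A s m).erase a).card := Finset.card_le_card fun i hi => by
        simp only [badIdx, Finset.mem_image, Finset.mem_filter, Finset.mem_range] at hi
        obtain ⟨j, ⟨hj, hbad⟩, rfl⟩ := hi
        obtain ⟨hgm, hga, hgbad⟩ := hmap j (by omega) hbad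
        simp only [badIdx, Finset.mem_erase, Finset.mem_filter, Finset.mem_range]
        exact ⟨hga, by omega, hgbad⟩
    _ < (badIdx A s m).card := Finset.card_erase_lt_of_mem (by simp [badIdx, hsa]; omega)

def IsPiecewiseAffine (Φ : ℝ → ℝ) (A : Set ℝ) (lo hi : ℝ) : Prop :=
  ∀ y ∈ Ioo lo hi, y ∉ A →
    ∃ l ∈ A, ∃ r ∈ A, y ∈ Ioo l r ∧ ∃ c d : ℝ, EqOn Φ (fun x => c * x + d) (Icc l r)

section Reduction

variable {X : Type*} [NormedAddCommGroup X] [NormedSpace ℝ X] {e : ℕ → X} {Φ : ℝ → ℝ}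
  {A : Set ℝ} {lo hi : ℝ}

lemma exists_norm_incrSum_update_ge {s : ℕ → ℝ} {k m : ℕ} {l r : ℝ}
    (hs : StrictMonoOn s (Iic m)) (hk : k + 2 ≤ m) (hl : l ∈ A) (hr : r ∈ A)
    (hy : s (k + 1) ∈ Ioo l r) (hΦ : ∃ c d : ℝ, EqOn Φ (fun x => c * x + d) (Icc l r)) :
    ∃ x, ((x ∈ A ∧ x ∈ Ioo (s k) (s (k + 2))) ∨ x = s k ∨ x = s (k + 2)) ∧
      ‖incrSum e Φ s m‖ ≤ ‖incrSum e Φ (update s (k + 1) x) m‖ := by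
  obtain ⟨c, d, hΦ⟩ := hΦ
  have hleft : s k < s (k + 1) := hs (by simp; omega) (by simp; omega) (by omega)
  have hright : s (k + 1) < s (k + 2) := hs (by simp; omega) (by simp; omega) (by omega)
  have hG : ∀ x, incrSum e Φ (update s (k + 1) x) m =
      (incrSum e Φ s m - Φ (s (k + 1)) • (e k - e (k + 1))) + Φ x • (e k - e (k + 1)) :=
    fun x => by rw [incrSum_update s (by omega) x, sub_smul]; abel
  have hlr : l ≤ r := (hy.1.trans hy.2).le
  have hmax := norm_add_smul_le_max hΦ (incrSum e Φ s m - Φ (s (k + 1)) • (e k - e (k + 1)))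
    (e k - e (k + 1)) (L := max (s k) l) (R := min (s (k + 2)) r) (x := s (k + 1))
    ⟨le_max_right _ _, max_le (hleft.trans hy.2).le hlr⟩
    ⟨le_min (hy.1.trans hright).le hlr, min_le_right _ _⟩
    ⟨(max_lt hleft hy.1).le, (lt_min hright hy.2).le⟩
  rw [← hG, ← hG, ← hG, update_eq_self] at hmax
  rcases le_max_iff.1 hmax with h | h
  · refine ⟨_, ?_, h⟩
    rcases lt_or_ge (s k) l with hl' | hl'
    · rw [max_eq_right hl'.le]
      exact Or.inl ⟨hl, hl', hy.1.trans hright⟩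
    · exact Or.inr (Or.inl (max_eq_left hl'))
  · refine ⟨_, ?_, h⟩
    rcases lt_or_ge r (s (k + 2)) with hr' | hr'
    · rw [min_eq_right hr'.le]
      exact Or.inl ⟨hr, hleft.trans hy.2, hr'⟩
    · exact Or.inr (Or.inr (min_eq_left hr'))

lemma IsPartition.exists_card_badIdx_lt (he : IsSymmetricBasis e) (hlo : lo ∈ A) (hhi : hi ∈ A)
    (hΦ : IsPiecewiseAffine Φ A lo hi) {s : ℕ → ℝ} {m : ℕ} (hs : IsPartition lo hi s m) {a : ℕ}
    (ha : a ≤ m) (hsa : s a ∉ A) :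
    ∃ m' s', IsPartition lo hi s' m' ∧ (badIdx A s' m').card < (badIdx A s m).card ∧
      ‖incrSum e Φ s m‖ ≤ ‖incrSum e Φ s' m'‖ := by
  obtain ⟨k, rfl⟩ : ∃ k, a = k + 1 :=
    Nat.exists_eq_succ_of_ne_zero (by rintro rfl; exact hsa (hs.first_eq ▸ hlo))
  obtain ⟨m, rfl⟩ : ∃ m', m = m' + 1 := Nat.exists_eq_succ_of_ne_zero (by omega)
  have hkm : k + 1 ≤ m := by
    have : k + 1 ≠ m + 1 := by rintro h; rw [h, hs.last_eq] at hsa; exact hsa hhi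
    omega
  have hy : s (k + 1) ∈ Ioo lo hi := by
    rw [← hs.first_eq, ← hs.last_eq]
    exact ⟨hs.strictMonoOn (by simp) (by simp; omega) (by omega),
      hs.strictMonoOn (by simp; omega) (by simp) (by omega)⟩
  obtain ⟨l, hl, r, hr, hylr, hΦlr⟩ := hΦ _ hy hsa
  obtain ⟨x, hx, hle⟩ :=
    exists_norm_incrSum_update_ge (e := e) hs.strictMonoOn (by omega) hl hr hylr hΦlr
  have hdel : (badIdx A (s ∘ succAboveNat (k + 1)) m).card < (badIdx A s (m + 1)).card :=
    card_badIdx_lt (succAboveNat_strictMono _).injective ha hsa fun j _ hbad =>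
      ⟨by simp only [succAboveNat]; split_ifs <;> omega, succAboveNat_ne _ _, hbad⟩
  rcases hx with ⟨hxA, hx⟩ | rfl | rfl
  · refine ⟨m + 1, _, hs.update (by omega) hx,
      card_badIdx_lt injective_id ha hsa fun j hj hbad => ?_, hle⟩
    have hjk : j ≠ k + 1 := by rintro rfl; simp [hxA] at hbad
    exact ⟨hj, hjk, by rwa [update_of_ne hjk] at hbad⟩
  -- In the last two cases the point has collided with a neighbour and is deleted.
  · refine ⟨m, _, hs.comp_succAboveNat (by omega) hkm, hdel, hle.trans_eq ?_⟩
    rw [← he.norm_incrSum_comp_succAboveNat (k := k) (by omega) (by simp), update_comp_succAboveNat]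
  · refine ⟨m, _, hs.comp_succAboveNat (by omega) hkm, hdel, hle.trans_eq ?_⟩
    rw [← he.norm_incrSum_comp_succAboveNat (k := k + 1) hkm (by simp),
      comp_succAboveNat_succ_of_eq (by simp), update_comp_succAboveNat]

theorem IsPartition.exists_knots_norm_incrSum_le (he : IsSymmetricBasis e) (hlo : lo ∈ A)
    (hhi : hi ∈ A) (hΦ : IsPiecewiseAffine Φ A lo hi) {s : ℕ → ℝ} {m : ℕ}
    (hs : IsPartition lo hi s m) :
    ∃ p u, IsPartition lo hi u p ∧ (∀ j ≤ p, u j ∈ A) ∧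
      ‖incrSum e Φ s m‖ ≤ ‖incrSum e Φ u p‖ := by
  induction hK : (badIdx A s m).card using Nat.strong_induction_on generalizing m s with
  | _ K ih =>
  by_cases hgood : ∀ j ≤ m, s j ∈ A
  · exact ⟨m, s, hs, hgood, le_rfl⟩
  push Not at hgood
  obtain ⟨a, ha, hsa⟩ := hgood
  obtain ⟨m', s', hs', hlt, hle⟩ := hs.exists_card_badIdx_lt he hlo hhi hΦ ha hsa
  obtain ⟨p, u, hu, huA, hle'⟩ := ih _ (hK ▸ hlt) hs' rfl
  exact ⟨p, u, hu, huA, hle.trans hle'⟩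

end Reduction

section Primitive

variable {f : ℝ → ℝ} {a b : ℝ}

lemma setIntegral_Ioo_eq_sub_of_integrableOn (hf : IntegrableOn f (Ioo a b)) {p q : ℝ}
    (hap : a ≤ p) (hpq : p ≤ q) (hqb : q ≤ b) :
    ∫ x in Ioo p q, f x = (∫ x in a..q, f x) - ∫ x in a..p, f x := by
  have hint : ∀ z ∈ Icc a b, IntervalIntegrable f volume a z := fun z hz =>
    (intervalIntegrable_iff_integrableOn_Ioo_of_le hz.1).2 (hf.mono_set (Ioo_subset_Ioo_right hz.2))
  rw [intervalIntegral.integral_interval_sub_left (hint q ⟨hap.trans hpq, hqb⟩)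
    (hint p ⟨hap, hpq.trans hqb⟩), intervalIntegral.integral_of_le hpq,
    integral_Ioc_eq_integral_Ioo]

lemma eqOn_primitive_of_eqOn_Ioo (hf : IntegrableOn f (Ioo a b)) {l r c : ℝ} (hal : a ≤ l)
    (hrb : r ≤ b) (hc : ∀ x ∈ Ioo l r, f x = c) :
    EqOn (fun z => ∫ x in a..z, f x) (fun z => c * z + ((∫ x in a..l, f x) - c * l)) (Icc l r) := by
  intro z hz
  have h := setIntegral_Ioo_eq_sub_of_integrableOn hf hal hz.1 (hz.2.trans hrb)
  rw [setIntegral_congr_fun measurableSet_Ioo fun x hx => hc x ⟨hx.1, hx.2.trans_le hz.2⟩,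
    setIntegral_const, Real.volume_real_Ioo_of_le hz.1, smul_eq_mul] at h
  simp only
  linarith

end Primitive

lemma exists_mem_Ioo_of_notMem_range {n : ℕ} {t : Fin (n + 1) → ℝ} (ht : Monotone t) {y : ℝ}
    (h₀ : t 0 < y) (h₁ : y < t (Fin.last n)) (hy : y ∉ range t) :
    ∃ i : Fin n, y ∈ Ioo (t i.castSucc) (t i.succ) := by
  induction n with
  | zero => exact absurd (h₀.trans h₁) (lt_irrefl _)
  | succ n ih =>
    by_cases hlast : y < t (Fin.last n).castSucc
    · obtain ⟨i, hi⟩ := ih (t := t ∘ Fin.castSucc) (ht.comp Fin.strictMono_castSucc.monotone)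
        h₀ hlast fun ⟨j, hj⟩ => hy ⟨_, hj⟩
      exact ⟨i.castSucc, by rwa [Fin.succ_castSucc]⟩
    · refine ⟨Fin.last n, lt_of_le_of_ne (not_lt.1 hlast) fun h => hy ⟨_, h⟩, ?_⟩
      simpa using h₁

lemma isPartition_clamp {m : ℕ} {s : Fin (m + 1) → ℝ} (hs : StrictMono s) :
    IsPartition (s 0) (s (Fin.last m)) (fun j => s (Fin.clamp j m)) m where
  strictMonoOn i hi j hj hij := hs <| by
    simp only [mem_Iic] at hi hj
    simp [Fin.lt_def, Fin.clamp, hi, hj, hij]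
  first_eq := rfl
  last_eq := congrArg s (Fin.ext (by simp [Fin.clamp]))

lemma sum_setIntegral_smul_eq_incrSum {X : Type*} [NormedAddCommGroup X] [NormedSpace ℝ X]
    (e : ℕ → X) {f : ℝ → ℝ} {a b : ℝ} (hf : IntegrableOn f (Ioo a b)) {p : ℕ}
    {u : Fin (p + 1) → ℝ} (hu : Monotone u) (hab : ∀ i, u i ∈ Icc a b) :
    ∑ j : Fin p, (∫ x in Ioo (u j.castSucc) (u j.succ), f x) • e j =
      incrSum e (fun z => ∫ x in a..z, f x) (fun j => u (Fin.clamp j p)) p := by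
  rw [incrSum, ← Fin.sum_univ_eq_sum_range]
  refine Finset.sum_congr rfl fun j _ => ?_
  have h₁ : Fin.clamp j p = j.castSucc := Fin.ext (by simp [Fin.clamp])
  have h₂ : Fin.clamp (j + 1) p = j.succ := Fin.ext (by simp [Fin.clamp])
  rw [h₁, h₂, setIntegral_Ioo_eq_sub_of_integrableOn hf (hab _).1
    (hu (Fin.castSucc_le_succ j)) (hab _).2]

/-- Let `f ∈ L¹(0,1)` be constant on each interval of a partition
`P₀ = {0 = t_0 < … < t_n = 1}`.  Then for every partition `Q = {0 = s_0 < … < s_m = 1}`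
of `[0,1]` into intervals there is a partition `P = {0 = u_0 < … < u_p = 1}` whose points
all belong to `P₀` with `τ(Q,f) ≤ τ(P,f)`, where
`τ({I_l},f) = ‖Σ_l (∫_{I_l} f dμ) e_l‖_X`. -/
theorem exists_coarser_partition_increasing_tau
    {X : Type*} [NormedAddCommGroup X] [NormedSpace ℝ X]
    (e : ℕ → X) (he : IsSymmetricBasis e)
    (f : ℝ → ℝ) (hf : IntegrableOn f (Set.Ioo (0 : ℝ) 1))
    (n : ℕ) (t : Fin (n + 1) → ℝ)
    (ht : StrictMono t) (ht0 : t 0 = 0) (ht1 : t (Fin.last n) = 1)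
    (hconst : ∀ i : Fin n, ∃ c : ℝ, ∀ x ∈ Set.Ioo (t i.castSucc) (t i.succ), f x = c) :
    ∀ (m : ℕ) (s : Fin (m + 1) → ℝ),
      StrictMono s → s 0 = 0 → s (Fin.last m) = 1 →
      ∃ (p : ℕ) (u : Fin (p + 1) → ℝ),
        StrictMono u ∧ u 0 = 0 ∧ u (Fin.last p) = 1 ∧
        (∀ i, u i ∈ Set.range t) ∧
        ‖∑ j : Fin m, (∫ x in Set.Ioo (s j.castSucc) (s j.succ), f x) • e (j : ℕ)‖ ≤
          ‖∑ j : Fin p, (∫ x in Set.Ioo (u j.castSucc) (u j.succ), f x) • e (j : ℕ)‖ := by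
  intro m s hs hs0 hs1
  have hIcc : ∀ {q} {v : Fin (q + 1) → ℝ}, Monotone v → v 0 = 0 → v (Fin.last q) = 1 →
      ∀ i, v i ∈ Icc 0 1 := fun hv h₀ h₁ i =>
    ⟨h₀ ▸ hv (Fin.zero_le i), h₁ ▸ hv (Fin.le_last i)⟩
  have hΦ : IsPiecewiseAffine (fun z => ∫ x in (0 : ℝ)..z, f x) (range t) 0 1 := by
    intro y hy hyt
    obtain ⟨i, hi⟩ := exists_mem_Ioo_of_notMem_range ht.monotone (ht0 ▸ hy.1) (ht1 ▸ hy.2) hyt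
    obtain ⟨c, hc⟩ := hconst i
    have htI := hIcc ht.monotone ht0 ht1
    exact ⟨_, mem_range_self _, _, mem_range_self _, hi, c, _,
      eqOn_primitive_of_eqOn_Ioo hf (htI _).1 (htI _).2 hc⟩
  have hS := isPartition_clamp hs
  rw [hs0, hs1] at hS
  obtain ⟨p, U, hU, hUt, hle⟩ :=
    hS.exists_knots_norm_incrSum_le he (show (0 : ℝ) ∈ range t from ⟨0, ht0⟩) ⟨_, ht1⟩ hΦ
  have hu : StrictMono fun i : Fin (p + 1) => U i := fun i j hij =>
    hU.strictMonoOn (Nat.lt_succ_iff.1 i.2) (Nat.lt_succ_iff.1 j.2) hij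
  refine ⟨p, fun i => U i, hu, hU.first_eq, hU.last_eq, fun i => hUt i (Nat.lt_succ_iff.1 i.2), ?_⟩
  rwa [sum_setIntegral_smul_eq_incrSum e hf hs.monotone (hIcc hs.monotone hs0 hs1),
    sum_setIntegral_smul_eq_incrSum e hf hu.monotone (hIcc hu.monotone hU.first_eq hU.last_eq),
    incrSum_congr (s := fun j => U (Fin.clamp j p)) (s' := U) fun j hj => by
      simp [Fin.clamp, min_eq_left (mem_Iic.1 hj)]]

end
end

section
/- Let X be a real Banach space with a normalized 1-symmetric basis (e_n), and let (h_n) be the Haar system in L¹(0,1). Then for every n ≥ 1 and all scalars a_1,…,a_{n+1}, ‖Σ_{i=1}^n a_i h_i‖_{JF_X} ≤ ‖Σ_{i=1}^{n+1} a_i h_i‖_{JF_X}. Consequently the Haar system is a monotone Schauder basis of JF_X. -/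
open MeasureTheory

noncomputable section

/-- The `JF_X` norm of an integrable function on `(0,1)`: the supremum of
`‖Σ_j (∫_{I_j} f dμ) e_j‖_X` over all finite families of pairwise disjoint open
subintervals of `(0,1)`. -/
def JFNorm1 {X : Type*} [NormedAddCommGroup X] [NormedSpace ℝ X]
    (e : ℕ → X) (f : ℝ → ℝ) : ℝ :=
  sSup { r | ∃ (m : ℕ) (a b : Fin m → ℝ),
    (∀ j, 0 ≤ a j ∧ a j < b j ∧ b j ≤ 1) ∧
    (Pairwise fun i j => Disjoint (Set.Ioo (a i) (b i)) (Set.Ioo (a j) (b j))) ∧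
    r = ‖∑ j : Fin m, (∫ x in Set.Ioo (a j) (b j), f x) • e (j : ℕ)‖ }

/-- The Haar system: `haar 1 = χ_{[0,1]}` and, for `n = 2^k + i` with `1 ≤ i ≤ 2^k`,
`haar n = χ_{[(2i-2)/2^{k+1},(2i-1)/2^{k+1}]} - χ_{((2i-1)/2^{k+1},2i/2^{k+1}]}`. -/
def haar (n : ℕ) : ℝ → ℝ :=
  if n = 0 then 0
  else if n = 1 then Set.indicator (Set.Icc (0 : ℝ) 1) (fun _ => (1 : ℝ))
  else
    let k := Nat.log2 (n - 1)
    let i := n - 2 ^ k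
    fun x =>
      Set.indicator (Set.Icc ((2 * (i : ℝ) - 2) / 2 ^ (k + 1)) ((2 * (i : ℝ) - 1) / 2 ^ (k + 1)))
          (fun _ => (1 : ℝ)) x -
        Set.indicator (Set.Ioc ((2 * (i : ℝ) - 1) / 2 ^ (k + 1)) ((2 * (i : ℝ)) / 2 ^ (k + 1)))
          (fun _ => (1 : ℝ)) x

/-!
On the support `[α, γ]` of `h_{n+1}` the partial sum `f = Σ_{i ≤ n} a_i h_i` is a constant `c`,
while `g = f + a_{n+1} h_{n+1}` agrees with `f` off `(α, γ)` and has the same integral over it.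
So the primitives `F`, `G` of `f`, `g` agree off `(α, γ)` and `F` is affine on `[α, γ]`.
If `c ≠ 0`, `F` is strictly monotone there, and sending `t` to the first point where `G` reaches
`F t` is an increasing rearrangement `Φ` of `[0, 1]` with `G ∘ Φ = F`: it carries every disjoint
family of intervals to one over which `g` has the integrals that `f` has over the original
family. If `c = 0`, each interval can be shrunk to a subinterval over which `g` has the integral
of `f` over the whole interval, unless that integral vanishes. A 1-symmetric basis is
1-unconditional, so these coefficientwise comparisons pass to the norms in `X`.
-/

open Set Function

theorem norm_smul_add_le_of_abs_le {E : Type*} [NormedAddCommGroup E] [NormedSpace ℝ E]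
    {u R : E} {x y : ℝ} (hsymm : ‖(-y) • u + R‖ = ‖y • u + R‖) (hxy : |x| ≤ |y|) :
    ‖x • u + R‖ ≤ ‖y • u + R‖ := by
  let φ : ℝ →ᵃ[ℝ] E := (LinearMap.toSpanSingleton ℝ E u).toAffineMap + AffineMap.const ℝ ℝ R
  have hconv : ConvexOn ℝ univ (norm ∘ φ) := convexOn_univ_norm.comp_affineMap φ
  have hx : x ∈ segment ℝ (-y) y := by
    rw [segment_eq_uIcc, mem_uIcc]
    rcases le_total 0 y with hy | hy
    · exact Or.inl (abs_le.mp (hxy.trans_eq (abs_of_nonneg hy)))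
    · have := abs_le.mp (hxy.trans_eq (abs_of_nonpos hy))
      exact Or.inr ⟨by linarith, by linarith⟩
  have := hconv.le_on_segment (mem_univ _) (mem_univ _) hx
  change ‖x • u + R‖ ≤ max ‖(-y) • u + R‖ ‖y • u + R‖ at this
  rwa [hsymm, max_self] at this

theorem norm_sum_update_le {ι E : Type*} [DecidableEq ι] [NormedAddCommGroup E] [NormedSpace ℝ E]
    {s : Finset ι} {u : ι → E}
    (hflip : ∀ (c : ι → ℝ) (j : ι), ‖∑ i ∈ s, update c j (-c j) i • u i‖ = ‖∑ i ∈ s, c i • u i‖)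
    (c : ι → ℝ) {j : ι} (hj : j ∈ s) {x y : ℝ} (hxy : |x| ≤ |y|) :
    ‖∑ i ∈ s, update c j x i • u i‖ ≤ ‖∑ i ∈ s, update c j y i • u i‖ := by
  have hsum : ∀ z, ∑ i ∈ s, update c j z i • u i = z • u j + ∑ i ∈ s \ {j}, c i • u i := by
    intro z
    simp_rw [apply_update (fun i t => t • u i)]
    exact Finset.sum_update_of_mem hj _ _
  have := hflip (update c j y) j
  rw [update_self, update_idem] at this
  rw [hsum, hsum] at this ⊢
  exact norm_smul_add_le_of_abs_le this hxy

theorem norm_sum_smul_le_of_abs_le {ι E : Type*} [DecidableEq ι] [NormedAddCommGroup E]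
    [NormedSpace ℝ E]
    {s : Finset ι} {u : ι → E}
    (hflip : ∀ (c : ι → ℝ) (j : ι), ‖∑ i ∈ s, update c j (-c j) i • u i‖ = ‖∑ i ∈ s, c i • u i‖)
    {v w : ι → ℝ} (h : ∀ i ∈ s, |v i| ≤ |w i|) :
    ‖∑ i ∈ s, v i • u i‖ ≤ ‖∑ i ∈ s, w i • u i‖ := by
  suffices ∀ t ⊆ s, ∀ v : ι → ℝ, (∀ i ∈ t, |v i| ≤ |w i|) → (∀ i ∉ t, v i = w i) →
      ‖∑ i ∈ s, v i • u i‖ ≤ ‖∑ i ∈ s, w i • u i‖ by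
    refine this s subset_rfl (s.piecewise v w) (fun i hi => ?_) (fun i hi => ?_) |>.trans_eq' ?_
    · simpa [hi] using h i hi
    · simp [hi]
    · exact congrArg norm (Finset.sum_congr rfl fun i hi => by simp [hi])
  intro t
  induction t using Finset.induction_on with
  | empty =>
    intro _ v _ hvw
    simp [funext fun i => hvw i (Finset.notMem_empty i)]
  | insert j t hj ih =>
    intro hts v hv hvw
    have hjs : j ∈ s := hts (Finset.mem_insert_self j t)
    calc ‖∑ i ∈ s, v i • u i‖ = ‖∑ i ∈ s, update v j (v j) i • u i‖ := by rw [update_eq_self]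
      _ ≤ ‖∑ i ∈ s, update v j (w j) i • u i‖ :=
        norm_sum_update_le hflip v hjs (hv j (Finset.mem_insert_self j t))
      _ ≤ ‖∑ i ∈ s, w i • u i‖ := by
        refine ih ((Finset.subset_insert j t).trans hts) _ (fun i hi => ?_) (fun i hi => ?_)
        · rw [update_of_ne (ne_of_mem_of_not_mem hi hj)]
          exact hv i (Finset.mem_insert_of_mem hi)
        · rcases eq_or_ne i j with rfl | hij
          · exact update_self ..
          · rw [update_of_ne hij]
            exact hvw i (by simp [hij, hi])

theorem IsSymmetricBasis.norm_sum_sign_mul_smul {X : Type*} [NormedAddCommGroup X]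
    [NormedSpace ℝ X] {e : ℕ → X} (he : IsSymmetricBasis e) {ε : ℕ → ℝ}
    (hε : ∀ n, ε n = 1 ∨ ε n = -1) {ι : Type*} (σ : ι → ℕ) (s : Finset ι) (c : ι → ℝ) :
    ‖∑ i ∈ s, (ε (σ i) * c i) • e (σ i)‖ = ‖∑ i ∈ s, c i • e (σ i)‖ := by
  have key := he.2.2 (∑ i ∈ s, Finsupp.single (σ i) (c i)) 1 ε hε
  simp only [Equiv.Perm.coe_one, id_eq] at key
  rwa [← Finsupp.sum_finsetSum_index (by simp) (by intros; simp [mul_add, add_smul]),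
    ← Finsupp.sum_finsetSum_index (by simp) (by intros; simp [add_smul]),
    Finset.sum_congr rfl fun i _ => Finsupp.sum_single_index (by simp),
    Finset.sum_congr rfl fun i _ => Finsupp.sum_single_index (by simp)] at key

theorem IsSymmetricBasis.norm_sum_smul_le_of_abs_le {X : Type*} [NormedAddCommGroup X]
    [NormedSpace ℝ X] {e : ℕ → X} (he : IsSymmetricBasis e) {ι : Type*} [DecidableEq ι]
    {σ : ι → ℕ} (hσ : Injective σ) (s : Finset ι) {v w : ι → ℝ}
    (h : ∀ i ∈ s, |v i| ≤ |w i|) :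
    ‖∑ i ∈ s, v i • e (σ i)‖ ≤ ‖∑ i ∈ s, w i • e (σ i)‖ := by
  refine _root_.norm_sum_smul_le_of_abs_le (fun c j => ?_) h
  have hε : ∀ n, (if n = σ j then -1 else 1 : ℝ) = 1 ∨ (if n = σ j then -1 else 1 : ℝ) = -1 := by
    intro n; split_ifs <;> simp
  rw [← he.norm_sum_sign_mul_smul hε σ s c]
  congr 2 with i
  rcases eq_or_ne i j with rfl | hij
  · simp
  · simp [hij, hσ.ne hij]

def IsDisjointSubintervals {m : ℕ} (a b : Fin m → ℝ) : Prop :=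
  (∀ j, 0 ≤ a j ∧ a j < b j ∧ b j ≤ 1) ∧
    Pairwise fun i j => Disjoint (Ioo (a i) (b i)) (Ioo (a j) (b j))

theorem IsDisjointSubintervals.of_subset {m : ℕ} {a b a' b' : Fin m → ℝ}
    (hab : IsDisjointSubintervals a b) (h : ∀ j, a j ≤ a' j ∧ a' j < b' j ∧ b' j ≤ b j) :
    IsDisjointSubintervals a' b' := by
  have hsub : ∀ j, Ioo (a' j) (b' j) ⊆ Ioo (a j) (b j) := fun j => Ioo_subset_Ioo (h j).1 (h j).2.2
  refine ⟨fun j => ⟨?_, (h j).2.1, ?_⟩, fun i j hij => (hab.2 hij).mono (hsub i) (hsub j)⟩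
  · exact (hab.1 j).1.trans (h j).1
  · exact (h j).2.2.trans (hab.1 j).2.2

theorem IsDisjointSubintervals.comp_strictMono {m : ℕ} {a b : Fin m → ℝ}
    (hab : IsDisjointSubintervals a b) {Φ : ℝ → ℝ} (hΦ : StrictMono Φ)
    (hmaps : MapsTo Φ (Icc 0 1) (Icc 0 1)) : IsDisjointSubintervals (Φ ∘ a) (Φ ∘ b) := by
  refine ⟨fun j => ?_, fun i j hij => ?_⟩
  · obtain ⟨h0, hlt, h1⟩ := hab.1 j
    exact ⟨(hmaps ⟨h0, by linarith⟩).1, hΦ hlt, (hmaps ⟨by linarith, h1⟩).2⟩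
  · have : Disjoint (Ioo (a i) (b i)) (Ioo (a j) (b j)) := hab.2 hij
    change Disjoint (Ioo (Φ (a i)) (Φ (b i))) (Ioo (Φ (a j)) (Φ (b j)))
    rw [Ioo_disjoint_Ioo] at this ⊢
    simpa only [comp_apply, ← hΦ.monotone.map_min, ← hΦ.monotone.map_max] using hΦ.monotone this

def IncrementsDominated (F G : ℝ → ℝ) : Prop :=
  ∀ (m : ℕ) (a b : Fin m → ℝ), IsDisjointSubintervals a b →
    ∃ a' b' : Fin m → ℝ, IsDisjointSubintervals a' b' ∧
      ∀ j, |F (b j) - F (a j)| ≤ |G (b' j) - G (a' j)|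

theorem integral_Ioo_eq_sub {f : ℝ → ℝ} (hf : Integrable f) (c a b : ℝ) (hab : a ≤ b) :
    ∫ x in Ioo a b, f x = (∫ x in c..b, f x) - ∫ x in c..a, f x := by
  rw [intervalIntegral.integral_interval_sub_left hf.intervalIntegrable hf.intervalIntegrable,
    intervalIntegral.integral_of_le hab, integral_Ioc_eq_integral_Ioo]

section JF

variable {X : Type*} [NormedAddCommGroup X] [NormedSpace ℝ X] {e : ℕ → X}

theorem norm_sum_le_JFNorm1 (he : ∀ n, ‖e n‖ ≤ 1) {g : ℝ → ℝ} (hg : Integrable g) {m : ℕ}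
    {a b : Fin m → ℝ} (hab : IsDisjointSubintervals a b) :
    ‖∑ j : Fin m, (∫ x in Ioo (a j) (b j), g x) • e j‖ ≤ JFNorm1 e g := by
  refine le_csSup ⟨∫ x, |g x|, ?_⟩ ⟨m, a, b, hab.1, hab.2, rfl⟩
  rintro r ⟨m, a, b, -, hdisj, rfl⟩
  calc ‖∑ j : Fin m, (∫ x in Ioo (a j) (b j), g x) • e j‖
      ≤ ∑ j : Fin m, ∫ x in Ioo (a j) (b j), |g x| := by
        refine (norm_sum_le _ _).trans (Finset.sum_le_sum fun j _ => ?_)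
        rw [norm_smul]
        refine (mul_le_of_le_one_right (norm_nonneg _) (he j)).trans ?_
        simpa only [Real.norm_eq_abs] using norm_integral_le_integral_norm g
    _ = ∫ x in ⋃ j, Ioo (a j) (b j), |g x| :=
        (integral_iUnion_fintype (fun _ => measurableSet_Ioo) hdisj
          fun _ => hg.abs.integrableOn).symm
    _ ≤ ∫ x, |g x| :=
        setIntegral_le_integral hg.abs (Filter.Eventually.of_forall fun x => abs_nonneg _)

theorem JFNorm1_le {f : ℝ → ℝ} {C : ℝ}
    (hC : ∀ (m : ℕ) (a b : Fin m → ℝ), IsDisjointSubintervals a b →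
      ‖∑ j : Fin m, (∫ x in Ioo (a j) (b j), f x) • e j‖ ≤ C) :
    JFNorm1 e f ≤ C := by
  refine csSup_le ⟨0, 0, Fin.elim0, Fin.elim0, fun j => j.elim0, fun i => i.elim0, by simp⟩ ?_
  rintro r ⟨m, a, b, h1, h2, rfl⟩
  exact hC m a b ⟨h1, h2⟩

theorem JFNorm1_le_JFNorm1_of_incrementsDominated (he : IsSymmetricBasis e) {f g F G : ℝ → ℝ}
    (hg : Integrable g) (hF : ∀ a b, a ≤ b → ∫ x in Ioo a b, f x = F b - F a)
    (hG : ∀ a b, a ≤ b → ∫ x in Ioo a b, g x = G b - G a) (hFG : IncrementsDominated F G) :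
    JFNorm1 e f ≤ JFNorm1 e g := by
  refine JFNorm1_le fun m a b hab => ?_
  obtain ⟨a', b', hab', hinc⟩ := hFG m a b hab
  calc ‖∑ j : Fin m, (∫ x in Ioo (a j) (b j), f x) • e j‖
      = ‖∑ j : Fin m, (F (b j) - F (a j)) • e j‖ := by
        simp only [hF _ _ (hab.1 _).2.1.le]
    _ ≤ ‖∑ j : Fin m, (G (b' j) - G (a' j)) • e j‖ :=
        he.norm_sum_smul_le_of_abs_le Fin.val_injective _ fun j _ => hinc j
    _ = ‖∑ j : Fin m, (∫ x in Ioo (a' j) (b' j), g x) • e j‖ := by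
        simp only [hG _ _ (hab'.1 _).2.1.le]
    _ ≤ JFNorm1 e g := norm_sum_le_JFNorm1 (fun n => (he.1 n).le) hg hab'

end JF

theorem incrementsDominated_of_forall_exists_subinterval {F G : ℝ → ℝ}
    (h : ∀ A B, 0 ≤ A → A < B → B ≤ 1 →
      ∃ A' B', A ≤ A' ∧ A' < B' ∧ B' ≤ B ∧ |F B - F A| ≤ |G B' - G A'|) :
    IncrementsDominated F G := by
  intro m a b hab
  choose a' b' hsub using fun j => h (a j) (b j) (hab.1 j).1 (hab.1 j).2.1 (hab.1 j).2.2
  exact ⟨a', b', hab.of_subset fun j => ⟨(hsub j).1, (hsub j).2.1, (hsub j).2.2.1⟩,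
    fun j => (hsub j).2.2.2⟩

theorem incrementsDominated_of_strictMono_comp_eq {F G Φ : ℝ → ℝ} (hΦ : StrictMono Φ)
    (hmaps : MapsTo Φ (Icc 0 1) (Icc 0 1)) (hGF : ∀ t, G (Φ t) = F t) :
    IncrementsDominated F G :=
  fun _ _ _ hab => ⟨Φ ∘ _, Φ ∘ _, hab.comp_strictMono hΦ hmaps, fun j => by simp [hGF]⟩

theorem StrictMonoOn.strictMono_ite_Ioo {α : Type*} [LinearOrder α] {p q : α} {τ : α → α}
    [DecidablePred (· ∈ Ioo p q)] (hτ : StrictMonoOn τ (Ioo p q))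
    (hmaps : MapsTo τ (Ioo p q) (Ioo p q)) :
    StrictMono fun t => if t ∈ Ioo p q then τ t else t := by
  intro x y hxy
  by_cases hx : x ∈ Ioo p q <;> by_cases hy : y ∈ Ioo p q <;> simp only [hx, hy, if_true, if_false]
  · exact hτ hx hy hxy
  · have hqy : q ≤ y := by
      by_contra h
      exact hy ⟨hx.1.trans hxy, not_le.mp h⟩
    exact (hmaps hx).2.trans_le hqy
  · have hxp : x ≤ p := by
      by_contra h
      exact hx ⟨not_le.mp h, hxy.trans hy.2⟩
    exact hxp.trans_lt (hmaps hy).1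
  · exact hxy

theorem exists_strictMonoOn_Ioo_comp_eq {F G : ℝ → ℝ} {p q : ℝ} (hG : ContinuousOn G (Icc p q))
    (hF : StrictMonoOn F (Icc p q)) (hp : G p = F p) (hq : G q = F q) :
    ∃ τ : ℝ → ℝ, StrictMonoOn τ (Ioo p q) ∧ MapsTo τ (Ioo p q) (Ioo p q) ∧
      ∀ t ∈ Ioo p q, G (τ t) = F t := by
  have hreach : ∀ t ∈ Ioo p q, ∀ u ∈ Icc p q, F t ≤ G u → ∃ s ∈ Icc p u, G s = F t := by
    intro t ht u hu htu
    have hpt : G p ≤ F t := by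
      rw [hp]
      exact hF.monotoneOn (left_mem_Icc.2 (ht.1.trans ht.2).le) (Ioo_subset_Icc_self ht) ht.1.le
    exact intermediate_value_Icc hu.1 (hG.mono (Icc_subset_Icc_right hu.2)) ⟨hpt, htu⟩
  -- `τ t` is the first point of `[p, q]` at which `G` takes the value `F t`.
  set τ : ℝ → ℝ := fun t => sInf (Icc p q ∩ G ⁻¹' {F t})
  have hτ : ∀ t ∈ Ioo p q, τ t ∈ Icc p q ∧ G (τ t) = F t := by
    intro t ht
    have hpq : p ≤ q := (ht.1.trans ht.2).le
    obtain ⟨s, hs, hGs⟩ := hreach t ht q (right_mem_Icc.2 hpq)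
      (hq.symm ▸ hF.monotoneOn (Ioo_subset_Icc_self ht) (right_mem_Icc.2 hpq) ht.2.le)
    exact (hG.preimage_isClosed_of_isClosed isClosed_Icc isClosed_singleton).csInf_mem
      ⟨s, hs, hGs⟩ ⟨p, fun s hs => hs.1.1⟩
  have hτmaps : MapsTo τ (Ioo p q) (Ioo p q) := by
    intro t ht
    obtain ⟨hmem, hGτ⟩ := hτ t ht
    have hpq : p ≤ q := (ht.1.trans ht.2).le
    refine ⟨hmem.1.lt_of_ne fun h => ?_, hmem.2.lt_of_ne fun h => ?_⟩
    · have := hF (left_mem_Icc.2 hpq) (Ioo_subset_Icc_self ht) ht.1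
      rw [← hGτ, ← h, hp] at this
      exact lt_irrefl _ this
    · have := hF (Ioo_subset_Icc_self ht) (right_mem_Icc.2 hpq) ht.2
      rw [← hGτ, h, hq] at this
      exact lt_irrefl _ this
  refine ⟨τ, fun t ht t' ht' htt' => ?_, hτmaps, fun t ht => (hτ t ht).2⟩
  obtain ⟨hmem', hGτ'⟩ := hτ t' ht'
  obtain ⟨s, hs, hGs⟩ := hreach t ht (τ t') hmem'
    (hGτ' ▸ hF.monotoneOn (Ioo_subset_Icc_self ht) (Ioo_subset_Icc_self ht') htt'.le)
  have hle : τ t ≤ τ t' :=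
    (csInf_le (s := Icc p q ∩ G ⁻¹' {F t}) ⟨p, fun s hs => hs.1.1⟩
      ⟨⟨hs.1, hs.2.trans hmem'.2⟩, hGs⟩).trans hs.2
  refine hle.lt_of_ne fun h => htt'.ne ?_
  exact hF.injOn (Ioo_subset_Icc_self ht) (Ioo_subset_Icc_self ht') (by rw [← (hτ t ht).2, h, hGτ'])

theorem exists_strictMono_comp_eq {F G : ℝ → ℝ} {p q : ℝ} (hG : ContinuousOn G (Icc p q))
    (hF : StrictMonoOn F (Icc p q)) (hGF : ∀ t ∉ Ioo p q, G t = F t) :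
    ∃ Φ : ℝ → ℝ, StrictMono Φ ∧ MapsTo Φ (Ioo p q) (Ioo p q) ∧ (∀ t ∉ Ioo p q, Φ t = t) ∧
      ∀ t, G (Φ t) = F t := by
  classical
  obtain ⟨τ, hτmono, hτmaps, hGτ⟩ := exists_strictMonoOn_Ioo_comp_eq hG hF
    (hGF p fun h => lt_irrefl p h.1) (hGF q fun h => lt_irrefl q h.2)
  refine ⟨_, hτmono.strictMono_ite_Ioo hτmaps, fun t ht => by simpa [ht] using hτmaps ht,
    fun t ht => if_neg ht, fun t => ?_⟩
  by_cases ht : t ∈ Ioo p q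
  · simpa only [if_pos ht] using hGτ t ht
  · simpa only [if_neg ht] using hGF t ht

theorem IncrementsDominated.of_neg {F G : ℝ → ℝ} (h : IncrementsDominated (-F) (-G)) :
    IncrementsDominated F G := by
  intro m a b hab
  obtain ⟨a', b', hab', hinc⟩ := h m a b hab
  refine ⟨a', b', hab', fun j => ?_⟩
  simpa only [Pi.neg_apply, ← neg_sub', abs_neg] using hinc j

theorem incrementsDominated_of_strictMonoOn {F G : ℝ → ℝ} {α γ : ℝ} (hα : 0 ≤ α) (hγ : γ ≤ 1)
    (hF : StrictMonoOn F (Icc α γ)) (hG : ContinuousOn G (Icc α γ))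
    (hGF : ∀ t ∉ Ioo α γ, G t = F t) : IncrementsDominated F G := by
  obtain ⟨Φ, hΦ, hmaps, hid, hGΦ⟩ := exists_strictMono_comp_eq hG hF hGF
  refine incrementsDominated_of_strictMono_comp_eq hΦ (fun t ht => ?_) hGΦ
  by_cases h : t ∈ Ioo α γ
  · exact ⟨hα.trans (hmaps h).1.le, (hmaps h).2.le.trans hγ⟩
  · rwa [hid t h]

theorem incrementsDominated_of_constOn {F G : ℝ → ℝ} {α γ : ℝ}
    (hF : ∀ t ∈ Icc α γ, F t = F α) (hGF : ∀ t ∉ Ioo α γ, G t = F t) :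
    IncrementsDominated F G := by
  refine incrementsDominated_of_forall_exists_subinterval fun A B _ hAB _ => ?_
  by_cases hFAB : F A = F B
  · exact ⟨A, B, le_rfl, hAB, le_rfl, by simp [hFAB]⟩
  by_cases hA : A ∈ Ioo α γ
  · have hγB : γ < B := by
      by_contra! hBγ
      exact hFAB (by rw [hF A (Ioo_subset_Icc_self hA), hF B ⟨hA.1.le.trans hAB.le, hBγ⟩])
    refine ⟨γ, B, hA.2.le, hγB, le_rfl, ?_⟩
    rw [hGF γ fun h => lt_irrefl γ h.2, hGF B fun h => h.2.not_gt hγB,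
      hF A (Ioo_subset_Icc_self hA), hF γ (right_mem_Icc.2 (hA.1.trans hA.2).le)]
  by_cases hB : B ∈ Ioo α γ
  · have hAα : A < α := by
      by_contra! hαA
      exact hA ⟨hαA.lt_of_ne fun h => hFAB (by rw [← h, hF B (Ioo_subset_Icc_self hB)]),
        hAB.trans hB.2⟩
    refine ⟨A, α, le_rfl, hAα, hB.1.le, ?_⟩
    rw [hGF α fun h => lt_irrefl α h.1, hGF A hA, hF B (Ioo_subset_Icc_self hB)]
  · exact ⟨A, B, le_rfl, hAB, le_rfl, by rw [hGF A hA, hGF B hB]⟩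

theorem incrementsDominated_of_affineOn {F G : ℝ → ℝ} {α γ c : ℝ} (hα : 0 ≤ α) (hγ : γ ≤ 1)
    (hF : ∀ t ∈ Icc α γ, F t = F α + c * (t - α)) (hG : ContinuousOn G (Icc α γ))
    (hGF : ∀ t ∉ Ioo α γ, G t = F t) : IncrementsDominated F G := by
  rcases lt_trichotomy c 0 with hc | rfl | hc
  · refine IncrementsDominated.of_neg (incrementsDominated_of_strictMonoOn hα hγ ?_ hG.neg
      fun t ht => by simp [hGF t ht])
    intro s hs t ht hst
    simp only [Pi.neg_apply, hF s hs, hF t ht]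
    nlinarith
  · exact incrementsDominated_of_constOn (fun t ht => by simp [hF t ht]) hGF
  · refine incrementsDominated_of_strictMonoOn hα hγ (fun s hs t ht hst => ?_) hG hGF
    rw [hF s hs, hF t ht]
    nlinarith

theorem IsPreconnected.mem_iff_mem_of_disjoint_frontier {α : Type*} [TopologicalSpace α]
    {s t : Set α} (hs : IsPreconnected s) (hst : Disjoint s (frontier t)) {x y : α}
    (hx : x ∈ s) (hy : y ∈ s) : x ∈ t ↔ y ∈ t := by
  have hcover : s ⊆ interior t ∪ interior tᶜ := by
    intro z hz
    by_cases hzt : z ∈ interior t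
    · exact Or.inl hzt
    · rw [interior_compl]
      exact Or.inr fun hcl => hst.ne_of_mem hz ⟨hcl, hzt⟩ rfl
  rcases hs.subset_or_subset isOpen_interior isOpen_interior
    (disjoint_compl_right.mono interior_subset interior_subset) hcover with h | h
  · exact iff_of_true (interior_subset (h hx)) (interior_subset (h hy))
  · exact iff_of_false (interior_subset (h hx)) (interior_subset (h hy))

theorem int_div_notMem_Ioo {N I : ℤ} (hN : N ≠ 2 * I - 1) {d : ℝ} (hd : 0 < d) :
    (N : ℝ) / d ∉ Ioo ((2 * I - 2) / d) (2 * I / d) := by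
  rintro ⟨h1, h2⟩
  rw [div_lt_div_iff_of_pos_right hd] at h1 h2
  have : 2 * I - 2 < N := by exact_mod_cast h1
  have : N < 2 * I := by exact_mod_cast h2
  omega

-- For `m ≥ 2`, `m = 2 ^ haarLevel m + haarShift m` is the decomposition `2^k + i` of the
-- definition of `haar`, which is `1` on `[haarLeft m, haarMid m]` and `-1` on
-- `(haarMid m, haarRight m]`.
def haarLevel (m : ℕ) : ℕ := Nat.log2 (m - 1)

def haarShift (m : ℕ) : ℕ := m - 2 ^ haarLevel m

def haarLeft (m : ℕ) : ℝ := (2 * (haarShift m : ℝ) - 2) / 2 ^ (haarLevel m + 1)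

def haarMid (m : ℕ) : ℝ := (2 * (haarShift m : ℝ) - 1) / 2 ^ (haarLevel m + 1)

def haarRight (m : ℕ) : ℝ := 2 * (haarShift m : ℝ) / 2 ^ (haarLevel m + 1)

section Haar

variable {m : ℕ}

theorem haar_of_two_le (hm : 2 ≤ m) :
    haar m = fun x => (Icc (haarLeft m) (haarMid m)).indicator (fun _ => 1) x -
      (Ioc (haarMid m) (haarRight m)).indicator (fun _ => 1) x := by
  rw [haar, if_neg (by omega), if_neg (by omega)]
  rfl

theorem pow_haarLevel_le (hm : 2 ≤ m) : 2 ^ haarLevel m ≤ m - 1 :=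
  (Nat.le_log2 (by omega)).1 le_rfl

theorem haarShift_spec (hm : 2 ≤ m) :
    m = 2 ^ haarLevel m + haarShift m ∧ 1 ≤ haarShift m ∧ haarShift m ≤ 2 ^ haarLevel m := by
  have hlow := pow_haarLevel_le hm
  have hhigh : m - 1 < 2 ^ (haarLevel m + 1) := (Nat.log2_lt (by omega)).1 (Nat.lt_succ_self _)
  rw [pow_succ] at hhigh
  unfold haarShift
  omega

theorem haarLeft_nonneg (hm : 2 ≤ m) : 0 ≤ haarLeft m := by
  have : (1 : ℝ) ≤ haarShift m := by exact_mod_cast (haarShift_spec hm).2.1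
  unfold haarLeft
  exact div_nonneg (by linarith) (by positivity)

theorem haarLeft_lt_haarMid : haarLeft m < haarMid m := by
  unfold haarLeft haarMid
  gcongr
  linarith

theorem haarMid_lt_haarRight : haarMid m < haarRight m := by
  unfold haarMid haarRight
  gcongr
  linarith

theorem haarRight_le_one (hm : 2 ≤ m) : haarRight m ≤ 1 := by
  have : (haarShift m : ℝ) ≤ 2 ^ haarLevel m := by exact_mod_cast (haarShift_spec hm).2.2
  unfold haarRight
  rw [div_le_one (by positivity), pow_succ]
  linarith

theorem integrable_haar (m : ℕ) : Integrable (haar m) := by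
  have hind : ∀ s : Set ℝ, MeasurableSet s → volume s ≠ ⊤ →
      Integrable (s.indicator fun _ => (1 : ℝ)) := fun s hs hfin =>
    (integrableOn_const hfin).integrable_indicator hs
  unfold haar
  split_ifs
  · exact integrable_zero _ _ _
  · exact hind _ measurableSet_Icc measure_Icc_lt_top.ne
  · exact (hind _ measurableSet_Icc measure_Icc_lt_top.ne).sub
      (hind _ measurableSet_Ioc measure_Ioc_lt_top.ne)

theorem haar_eqOn_Ioo_left_mid (hm : 2 ≤ m) :
    EqOn (haar m) (fun _ => 1) (Ioo (haarLeft m) (haarMid m)) := fun x hx => by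
  simp [haar_of_two_le hm, hx.1.le, hx.2.le, hx.2.not_gt]

theorem haar_eqOn_Ioo_mid_right (hm : 2 ≤ m) :
    EqOn (haar m) (fun _ => -1) (Ioo (haarMid m) (haarRight m)) := fun x hx => by
  simp [haar_of_two_le hm, hx.1, hx.2.le, hx.1.not_ge]

theorem haar_eq_zero_of_lt_haarLeft (hm : 2 ≤ m) {x : ℝ} (hx : x < haarLeft m) :
    haar m x = 0 := by
  have := (hx.trans haarLeft_lt_haarMid)
  simp [haar_of_two_le hm, hx.not_ge, this.not_gt]

theorem haar_eq_zero_of_haarRight_lt (hm : 2 ≤ m) {x : ℝ} (hx : haarRight m < x) :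
    haar m x = 0 := by
  have := haarMid_lt_haarRight.trans hx
  simp [haar_of_two_le hm, hx.not_ge, this.not_ge]

theorem integral_haar_left_right (hm : 2 ≤ m) :
    ∫ x in haarLeft m..haarRight m, haar m x = 0 := by
  rw [← intervalIntegral.integral_add_adjacent_intervals (b := haarMid m)
      (integrable_haar m).intervalIntegrable (integrable_haar m).intervalIntegrable,
    intervalIntegral.integral_congr_Ioo_of_le haarLeft_lt_haarMid.le (haar_eqOn_Ioo_left_mid hm),
    intervalIntegral.integral_congr_Ioo_of_le haarMid_lt_haarRight.le
      (haar_eqOn_Ioo_mid_right hm)]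
  simp only [intervalIntegral.integral_const, smul_eq_mul, haarLeft, haarMid, haarRight]
  ring

theorem integral_haar_eq_zero_of_notMem (hm : 2 ≤ m) {t : ℝ}
    (ht : t ∉ Ioo (haarLeft m) (haarRight m)) : ∫ x in haarLeft m..t, haar m x = 0 := by
  rcases le_or_gt t (haarLeft m) with htl | hlt
  · rw [intervalIntegral.integral_congr_uIoo (g := fun _ => 0) fun x hx => ?_,
      intervalIntegral.integral_zero]
    rw [uIoo_of_ge htl] at hx
    exact haar_eq_zero_of_lt_haarLeft hm hx.2
  have hrt : haarRight m ≤ t := not_lt.mp fun h => ht ⟨hlt, h⟩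
  rw [← intervalIntegral.integral_add_adjacent_intervals (b := haarRight m)
      (integrable_haar m).intervalIntegrable (integrable_haar m).intervalIntegrable,
    integral_haar_left_right hm, zero_add,
    intervalIntegral.integral_congr_Ioo_of_le hrt (g := fun _ => 0)
      fun x hx => haar_eq_zero_of_haarRight_lt hm hx.1, intervalIntegral.integral_zero]

/-- The only point of the form `N / 2 ^ (k + 1)`, `k = haarLevel (n + 1)`, inside the support of
`haar (n + 1)` is its midpoint, with odd `N`; a knot of `haar m`, `m ≤ n`, has an even such
numerator when `haarLevel m < k`, and lies left of that support when `haarLevel m = k`. -/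
theorem div_pow_haarLevel_notMem_Ioo {n : ℕ} (hm : 2 ≤ m) (hmn : m ≤ n) {N : ℤ}
    (hN : N ≤ 2 * haarShift m) :
    (N : ℝ) / 2 ^ (haarLevel m + 1) ∉ Ioo (haarLeft (n + 1)) (haarRight (n + 1)) := by
  obtain ⟨hm_eq, -, -⟩ := haarShift_spec hm
  obtain ⟨hn_eq, -, -⟩ := haarShift_spec (show 2 ≤ n + 1 by omega)
  have hLK : haarLevel m ≤ haarLevel (n + 1) :=
    (Nat.le_log2 (by omega)).2 ((pow_haarLevel_le hm).trans (by omega))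
  have hscale : (N : ℝ) / 2 ^ (haarLevel m + 1) =
      ((N * 2 ^ (haarLevel (n + 1) - haarLevel m) : ℤ) : ℝ) / 2 ^ (haarLevel (n + 1) + 1) := by
    rw [show haarLevel (n + 1) + 1 = haarLevel m + 1 + (haarLevel (n + 1) - haarLevel m) by omega,
      pow_add (2 : ℝ) (haarLevel m + 1)]
    push_cast
    exact (mul_div_mul_right _ _ (pow_ne_zero _ two_ne_zero)).symm
  have hodd : N * 2 ^ (haarLevel (n + 1) - haarLevel m) ≠ 2 * haarShift (n + 1) - 1 := by
    rcases hLK.lt_or_eq with hlt | heq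
    · have : (2 : ℤ) ∣ N * 2 ^ (haarLevel (n + 1) - haarLevel m) :=
        (dvd_pow_self (2 : ℤ) (by omega)).mul_left N
      omega
    · rw [heq, Nat.sub_self, pow_zero, mul_one]
      rw [heq] at hm_eq
      omega
  rw [hscale]
  simpa [haarLeft, haarRight] using int_div_notMem_Ioo hodd (d := 2 ^ (haarLevel (n + 1) + 1))
    (by positivity)

theorem haar_eq_haar_of_mem_Ioo {n : ℕ} (hm : 1 ≤ m) (hmn : m ≤ n) {x y : ℝ}
    (hx : x ∈ Ioo (haarLeft (n + 1)) (haarRight (n + 1)))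
    (hy : y ∈ Ioo (haarLeft (n + 1)) (haarRight (n + 1))) : haar m x = haar m y := by
  have key : ∀ (t : Set ℝ) (u v : ℝ), frontier t ⊆ {u, v} →
      u ∉ Ioo (haarLeft (n + 1)) (haarRight (n + 1)) →
      v ∉ Ioo (haarLeft (n + 1)) (haarRight (n + 1)) → (x ∈ t ↔ y ∈ t) :=
    fun t u v ht hu hv => isPreconnected_Ioo.mem_iff_mem_of_disjoint_frontier
      ((disjoint_insert_right.2 ⟨hu, disjoint_singleton_right.2 hv⟩).mono_right ht) hx hy
  rcases hm.eq_or_lt with rfl | hm2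
  · have h0 : (0 : ℝ) ∉ Ioo (haarLeft (n + 1)) (haarRight (n + 1)) :=
      fun h => (haarLeft_nonneg (by omega)).not_gt h.1
    have h1 : (1 : ℝ) ∉ Ioo (haarLeft (n + 1)) (haarRight (n + 1)) :=
      fun h => (haarRight_le_one (by omega)).not_gt h.2
    simp only [haar, one_ne_zero, if_false, if_true, indicator_apply,
      key _ _ _ (frontier_Icc zero_le_one).subset h0 h1]
  have hl : haarLeft m ∉ Ioo (haarLeft (n + 1)) (haarRight (n + 1)) := by
    simpa [haarLeft] using
      div_pow_haarLevel_notMem_Ioo hm2 hmn (N := 2 * haarShift m - 2) (by omega)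
  have hc : haarMid m ∉ Ioo (haarLeft (n + 1)) (haarRight (n + 1)) := by
    simpa [haarMid] using
      div_pow_haarLevel_notMem_Ioo hm2 hmn (N := 2 * haarShift m - 1) (by omega)
  have hr : haarRight m ∉ Ioo (haarLeft (n + 1)) (haarRight (n + 1)) := by
    simpa [haarRight] using div_pow_haarLevel_notMem_Ioo hm2 hmn (N := 2 * haarShift m) le_rfl
  simp only [haar_of_two_le hm2, indicator_apply,
    key _ _ _ (frontier_Icc haarLeft_lt_haarMid.le).subset hl hc,
    key _ _ _ (frontier_Ioc haarMid_lt_haarRight).subset hc hr]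

theorem sum_haar_eq_of_mem_Ioo {n : ℕ} (a : ℕ → ℝ) {x y : ℝ}
    (hx : x ∈ Ioo (haarLeft (n + 1)) (haarRight (n + 1)))
    (hy : y ∈ Ioo (haarLeft (n + 1)) (haarRight (n + 1))) :
    ∑ i ∈ Finset.Icc 1 n, a i * haar i x = ∑ i ∈ Finset.Icc 1 n, a i * haar i y :=
  Finset.sum_congr rfl fun i hi => by
    rw [haar_eq_haar_of_mem_Ioo (Finset.mem_Icc.1 hi).1 (Finset.mem_Icc.1 hi).2 hx hy]

end Haar

/-- For `X` with a normalized 1-symmetric basis, the partial sums of the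
Haar expansion are monotone in the `JF_X` norm: for every `n ≥ 1` and scalars
`a_1, …, a_{n+1}`, `‖Σ_{i=1}^n a_i h_i‖_{JF_X} ≤ ‖Σ_{i=1}^{n+1} a_i h_i‖_{JF_X}`.
Consequently the Haar system is a monotone Schauder basis of `JF_X`. -/
theorem haar_partial_sums_monotone_in_JFX
    {X : Type*} [NormedAddCommGroup X] [NormedSpace ℝ X]
    (e : ℕ → X) (he : IsSymmetricBasis e)
    (n : ℕ) (hn : 1 ≤ n) (a : ℕ → ℝ) :
    JFNorm1 e (fun x => ∑ i ∈ Finset.Icc 1 n, a i * haar i x) ≤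
      JFNorm1 e (fun x => ∑ i ∈ Finset.Icc 1 (n + 1), a i * haar i x) := by
  have hn2 : 2 ≤ n + 1 := by omega
  set α := haarLeft (n + 1)
  set β := haarMid (n + 1)
  set f : ℝ → ℝ := fun x => ∑ i ∈ Finset.Icc 1 n, a i * haar i x
  have hint : ∀ N, Integrable fun x => ∑ i ∈ Finset.Icc 1 N, a i * haar i x :=
    fun N => integrable_finsetSum _ fun i _ => (integrable_haar i).const_mul (a i)
  have hconst : ∀ x ∈ Ioo α (haarRight (n + 1)), f x = f β := fun x hx =>
    sum_haar_eq_of_mem_Ioo a hx ⟨haarLeft_lt_haarMid, haarMid_lt_haarRight⟩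
  have hsplit : ∀ t, ∫ x in α..t, ∑ i ∈ Finset.Icc 1 (n + 1), a i * haar i x =
      (∫ x in α..t, f x) + a (n + 1) * ∫ x in α..t, haar (n + 1) x := by
    intro t
    simp_rw [Finset.sum_Icc_succ_top (by omega : 1 ≤ n + 1)]
    rw [intervalIntegral.integral_add (hint n).intervalIntegrable
      ((integrable_haar _).const_mul _).intervalIntegrable, intervalIntegral.integral_const_mul]
  refine JFNorm1_le_JFNorm1_of_incrementsDominated he (hint _) (integral_Ioo_eq_sub (hint _) α)
    (integral_Ioo_eq_sub (hint _) α) ?_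
  refine incrementsDominated_of_affineOn (c := f β) (haarLeft_nonneg hn2) (haarRight_le_one hn2)
    (fun t ht => ?_) ((hint _).continuous_primitive α).continuousOn (fun t ht => ?_)
  · rw [intervalIntegral.integral_same, zero_add,
      intervalIntegral.integral_congr_Ioo_of_le ht.1 (g := fun _ => f β)
        fun x hx => hconst x ⟨hx.1, hx.2.trans_le ht.2⟩,
      intervalIntegral.integral_const, smul_eq_mul, mul_comm]
  · rw [hsplit, integral_haar_eq_zero_of_notMem hn2 ht, mul_zero, add_zero]

end
end

section
/- Let X be a real Banach space with a normalized 1-symmetric basis (e_n). Let (A_n)_{n≥1} be a sequence of pairwise disjoint subintervals of [0,1] that are successive (each A_n lies entirely to the left of A_{n+1}) with μ(A_{2n−1}) = μ(A_{2n}) for every n, and set y_n = χ_{A_{2n−1}} − χ_{A_{2n}}. Then for every finitely supported scalar sequence (α_n): ‖Σ_n α_n e_n‖_X ≤ ‖Σ_n α_n · y_n/μ(A_{2n−1})‖_{JF_X} ≤ 2 ‖Σ_n α_n e_n‖_X; that is, (y_n/μ(A_{2n−1}))_n is 2-equivalent to the unit vector basis (e_n) of X. -/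
open MeasureTheory

noncomputable section

/-!
Testing `f = ∑ α n • y_n / μ(A_{2n})` on the intervals `A_0, A_2, A_4, …` returns
`∑ α n • e n`, which gives the lower bound. For the upper bound, write the integral of `f` over
a test interval `I_j` as `∑ α n * G_n(I_j)` and split `G = G⁺ - G⁻`. Since `A_{2n}` and
`A_{2n+1}` have equal length, `G_n(I) > 0` forces the right end of `I` into the hull of
`A_{2n} ∪ A_{2n+1}` (and `G_n(I) < 0` its left end), so every row of `G⁺` and of `G⁻` has at
most one nonzero entry, while disjointness of the `I_j` bounds every column sum by one. Such a
matrix sends `∑ α n • e n` into the convex hull of the vectors `∑_{n ∈ T} α n • e (q n)` with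
`q` injective on `T`, and by 1-symmetry these have norm at most `‖∑ α n • e n‖`. Each of `G⁺`,
`G⁻` thus contributes at most `‖∑ α n • e n‖`.
-/

open Set Finset Function
open scoped Pointwise

theorem Set.InjOn.exists_perm_eqOn {α : Type*} {t : Set α} {q : α → α} (ht : t.Finite)
    (hq : InjOn q t) : ∃ π : Equiv.Perm α, EqOn π q t := by
  classical
  have : Finite {x | x ∈ t} := ht.to_subtype
  exact ⟨(hq.bijOn_image.equiv _).extendSubtype, fun n hn =>
    Equiv.extendSubtype_apply_of_mem _ _ hn⟩

theorem Convex.sum_smul_mem_of_zero_mem {E ι : Type*} [AddCommGroup E] [Module ℝ E] {K : Set E}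
    (hK : Convex ℝ K) (h0 : (0 : E) ∈ K) {t : Finset ι} {w : ι → ℝ} {z : ι → E}
    (hw₀ : ∀ i ∈ t, 0 ≤ w i) (hw₁ : ∑ i ∈ t, w i ≤ 1) (hz : ∀ i ∈ t, w i ≠ 0 → z i ∈ K) :
    ∑ i ∈ t, w i • z i ∈ K := by
  classical
  set W := ∑ i ∈ t, w i
  rcases (sum_nonneg hw₀).eq_or_lt with hW | hW
  · rw [sum_eq_zero fun i hi => by rw [(sum_eq_zero_iff_of_nonneg hw₀).1 hW.symm i hi, zero_smul]]
    exact h0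
  set z' : ι → E := fun i => if w i = 0 then 0 else z i
  have hz' : ∀ i ∈ t, z' i ∈ K := fun i hi => by
    by_cases h : w i = 0 <;> simp [z', h, h0, hz i hi]
  have hmem : ∑ i ∈ t, (w i / W) • z' i ∈ K :=
    hK.sum_mem (fun i hi => div_nonneg (hw₀ i hi) hW.le)
      (by rw [← sum_div, div_self hW.ne']) hz'
  convert hK.smul_mem_of_zero_mem h0 hmem ⟨hW.le, hw₁⟩ using 1
  rw [smul_sum]
  refine sum_congr rfl fun i _ => ?_
  by_cases h : w i = 0
  · simp [h, z']
  · simp only [z', if_neg h, smul_smul, W, mul_div_cancel₀ _ hW.ne']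

namespace IsSymmetricBasis

variable {X : Type*} [NormedAddCommGroup X] [NormedSpace ℝ X] {e : ℕ → X}

theorem norm_sum_sign_perm (he : IsSymmetricBasis e) (T : Finset ℕ) (α : ℕ → ℝ)
    (π : Equiv.Perm ℕ) {ε : ℕ → ℝ} (hε : ∀ n, ε n = 1 ∨ ε n = -1) :
    ‖∑ n ∈ T, (ε n * α n) • e (π n)‖ = ‖∑ n ∈ T, α n • e n‖ := by
  classical
  have key := he.2.2 (Finsupp.onFinset T (fun n => if n ∈ T then α n else 0)
    fun n h => by by_contra hn; simp [hn] at h) π ε hε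
  rw [Finsupp.onFinset_sum _ (by simp), Finsupp.onFinset_sum _ (by simp)] at key
  convert key using 2 <;> exact sum_congr rfl fun n hn => by rw [if_pos hn]

theorem norm_sum_le_of_subset (he : IsSymmetricBasis e) {T s : Finset ℕ} (hT : T ⊆ s)
    (α : ℕ → ℝ) : ‖∑ n ∈ T, α n • e n‖ ≤ ‖∑ n ∈ s, α n • e n‖ := by
  classical
  set ε : ℕ → ℝ := fun n => if n ∈ T then 1 else -1
  have hflip : ‖∑ n ∈ s, (ε n * α n) • e n‖ = ‖∑ n ∈ s, α n • e n‖ := by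
    simpa using he.norm_sum_sign_perm s α 1 fun n => by by_cases h : n ∈ T <;> simp [ε, h]
  -- the coefficient `1 + ε n` is `2` on `T` and `0` off `T`
  have hsplit : (2 : ℝ) • ∑ n ∈ T, α n • e n =
      ∑ n ∈ s, α n • e n + ∑ n ∈ s, (ε n * α n) • e n := by
    rw [← sum_add_distrib, ← sum_subset hT fun n _ hn => by simp [ε, hn], smul_sum]
    refine sum_congr rfl fun n hn => ?_
    simp only [ε, if_pos hn, smul_smul]
    rw [← add_smul]; ring_nf
  have := norm_add_le (∑ n ∈ s, α n • e n) (∑ n ∈ s, (ε n * α n) • e n)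
  rw [← hsplit, norm_smul, hflip] at this
  norm_num at this
  linarith

theorem norm_sum_comp_of_injOn_s8 (he : IsSymmetricBasis e) {T : Finset ℕ} {q : ℕ → ℕ}
    (hq : InjOn q T) (α : ℕ → ℝ) : ‖∑ n ∈ T, α n • e (q n)‖ = ‖∑ n ∈ T, α n • e n‖ := by
  obtain ⟨π, hπ⟩ := hq.exists_perm_eqOn T.finite_toSet
  rw [← he.norm_sum_sign_perm T α π (ε := 1) fun _ => Or.inl rfl]
  simp only [Pi.one_apply, one_mul]
  exact congrArg norm (sum_congr rfl fun n hn => by rw [hπ (mem_coe.2 hn)])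

theorem norm_sum_comp_le_of_injOn (he : IsSymmetricBasis e) {T s : Finset ℕ} (hT : T ⊆ s)
    {q : ℕ → ℕ} (hq : InjOn q T) (α : ℕ → ℝ) :
    ‖∑ n ∈ T, α n • e (q n)‖ ≤ ‖∑ n ∈ s, α n • e n‖ :=
  (he.norm_sum_comp_of_injOn_s8 hq α).trans_le (he.norm_sum_le_of_subset hT α)

theorem norm_sum_weighted_le (he : IsSymmetricBasis e) {ι : Type*} [Fintype ι] {r : ι → ℕ}
    (hr : Injective r) {P : ι → ℕ → ℝ} (hP₀ : ∀ j n, 0 ≤ P j n)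
    (hcol : ∀ n, ∑ j, P j n ≤ 1) (hrow : ∀ j, {n | P j n ≠ 0}.Subsingleton)
    (s : Finset ℕ) (α : ℕ → ℝ) :
    ‖∑ j, (∑ n ∈ s, α n * P j n) • e (r j)‖ ≤ ‖∑ n ∈ s, α n • e n‖ := by
  classical
  set S : ℕ → Set X := fun n => insert 0 ((fun j => α n • e (r j)) '' {j | P j n ≠ 0})
  have hvert : ∑ n ∈ s, S n ⊆ Metric.closedBall 0 ‖∑ n ∈ s, α n • e n‖ := by
    intro x hx
    obtain ⟨g, hg, rfl⟩ := (Set.mem_finsetSum s S x).1 hx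
    have hvertex : ∀ n ∈ s, g n ≠ 0 → ∃ k, (∃ j, r j = k ∧ P j n ≠ 0) ∧ α n • e k = g n := by
      intro n hn hne
      rcases hg hn with h | ⟨j, hj, hjg⟩
      · exact absurd h hne
      · exact ⟨r j, ⟨j, rfl, hj⟩, hjg⟩
    choose! q hq hqg using hvertex
    have hsum : ∑ n ∈ s, g n = ∑ n ∈ s with g n ≠ 0, α n • e (q n) := by
      rw [← sum_filter_ne_zero]
      exact sum_congr rfl fun n hn => (hqg n (mem_filter.1 hn).1 (mem_filter.1 hn).2).symm
    have hinj : InjOn q (s.filter (g · ≠ 0)) := by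
      intro n₁ hn₁ n₂ hn₂ hq₁₂
      obtain ⟨j₁, hj₁, hP₁⟩ := hq n₁ (mem_filter.1 hn₁).1 (mem_filter.1 hn₁).2
      obtain ⟨j₂, hj₂, hP₂⟩ := hq n₂ (mem_filter.1 hn₂).1 (mem_filter.1 hn₂).2
      obtain rfl : j₁ = j₂ := hr (hj₁.trans (hq₁₂.trans hj₂.symm))
      exact hrow j₁ hP₁ hP₂
    rw [mem_closedBall_zero_iff, hsum]
    exact he.norm_sum_comp_le_of_injOn (filter_subset _ _) hinj α
  have hcolumn : ∀ n ∈ s, ∑ j, P j n • (α n • e (r j)) ∈ convexHull ℝ (S n) := fun n _ =>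
    (convex_convexHull ℝ _).sum_smul_mem_of_zero_mem (subset_convexHull ℝ _ (mem_insert _ _))
      (fun j _ => hP₀ j n) (hcol n)
      fun j _ hj => subset_convexHull ℝ _ (mem_insert_of_mem _ ⟨j, hj, rfl⟩)
  have hmem : ∑ n ∈ s, ∑ j, P j n • (α n • e (r j)) ∈ convexHull ℝ (∑ n ∈ s, S n) := by
    rw [convexHull_sum]
    exact Set.finsetSum_mem_finsetSum _ _ _ hcolumn
  have hv : ∑ j, (∑ n ∈ s, α n * P j n) • e (r j) = ∑ n ∈ s, ∑ j, P j n • (α n • e (r j)) := by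
    rw [sum_comm]
    simp only [sum_smul, smul_smul, mul_comm]
  rw [hv, ← mem_closedBall_zero_iff]
  exact convexHull_min hvert (convex_closedBall 0 _) hmem

end IsSymmetricBasis

theorem volume_real_Ioo_inter_Ioo (c d u v : ℝ) :
    volume.real (Ioo c d ∩ Ioo u v) = max (min d v - max c u) 0 := by
  rw [Ioo_inter_Ioo, Real.volume_real_Ioo]

theorem right_mem_Ioo_of_volume_real_inter_lt {c d u₁ v₁ u₂ v₂ : ℝ} (h₁₂ : v₁ ≤ u₂)
    (hl : v₁ - u₁ = v₂ - u₂)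
    (h : volume.real (Ioo c d ∩ Ioo u₂ v₂) < volume.real (Ioo c d ∩ Ioo u₁ v₁)) :
    d ∈ Ioo u₁ v₂ := by
  simp only [volume_real_Ioo_inter_Ioo, max_def, min_def] at h
  split_ifs at h <;> constructor <;> linarith

theorem left_mem_Ioo_of_volume_real_inter_lt {c d u₁ v₁ u₂ v₂ : ℝ} (h₁₂ : v₁ ≤ u₂)
    (hl : v₁ - u₁ = v₂ - u₂)
    (h : volume.real (Ioo c d ∩ Ioo u₁ v₁) < volume.real (Ioo c d ∩ Ioo u₂ v₂)) :
    c ∈ Ioo u₁ v₂ := by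
  simp only [volume_real_Ioo_inter_Ioo, max_def, min_def] at h
  split_ifs at h <;> constructor <;> linarith

theorem sum_measureReal_inter_le {α ι : Type*} [MeasurableSpace α] {μ : Measure α} [Fintype ι]
    {I : ι → Set α} (hI : Pairwise (Disjoint on I)) (hmeas : ∀ j, MeasurableSet (I j))
    {A : Set α} (hAm : MeasurableSet A) (hA : μ A ≠ ⊤) : ∑ j, μ.real (I j ∩ A) ≤ μ.real A := by
  rw [← measureReal_biUnion_finset (fun i _ j _ hij => (hI hij).mono inter_subset_left
    inter_subset_left) (fun j _ => (hmeas j).inter hAm)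
    fun j _ => ne_top_of_le_ne_top hA (measure_mono inter_subset_right)]
  exact measureReal_mono (iUnion₂_subset fun j _ => inter_subset_right) hA

theorem sum_posPart_le_one {ι : Type*} [Fintype ι] {I : ι → Set ℝ} (hI : Pairwise (Disjoint on I))
    (hmeas : ∀ j, MeasurableSet (I j)) {u v : ℝ} (huv : u < v) {w : ι → ℝ}
    (hw : ∀ j, w j ≤ volume.real (I j ∩ Ioo u v) / (v - u)) : ∑ j, (w j)⁺ ≤ 1 := by
  have hL : 0 < v - u := sub_pos.2 huv
  calc ∑ j, (w j)⁺ ≤ ∑ j, volume.real (I j ∩ Ioo u v) / (v - u) :=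
        sum_le_sum fun j _ => sup_le (hw j) (div_nonneg measureReal_nonneg hL.le)
    _ ≤ volume.real (Ioo u v) / (v - u) := by
        rw [← sum_div]
        gcongr
        exact sum_measureReal_inter_le hI hmeas measurableSet_Ioo measure_Ioo_lt_top.ne
    _ = 1 := by rw [Real.volume_real_Ioo, max_eq_left hL.le, div_self hL.ne']

/-- `∫_{(c,d)} y_n`, where `y_n = (χ_{A_{2n}} - χ_{A_{2n+1}}) / μ(A_{2n})` and
`A_k = (a k, b k)`. -/
def pairWeight (a b : ℕ → ℝ) (n : ℕ) (c d : ℝ) : ℝ :=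
  (volume.real (Ioo c d ∩ Ioo (a (2 * n)) (b (2 * n))) -
    volume.real (Ioo c d ∩ Ioo (a (2 * n + 1)) (b (2 * n + 1)))) / (b (2 * n) - a (2 * n))

theorem setIntegral_eq_sum_pairWeight (a b : ℕ → ℝ) (s : Finset ℕ) (α : ℕ → ℝ) (c d : ℝ) :
    ∫ x in Ioo c d, ∑ n ∈ s,
      α n * ((Set.indicator (Set.Ioo (a (2 * n)) (b (2 * n))) (fun _ => (1 : ℝ)) x -
          Set.indicator (Set.Ioo (a (2 * n + 1)) (b (2 * n + 1))) (fun _ => (1 : ℝ)) x) /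
        (b (2 * n) - a (2 * n))) =
      ∑ n ∈ s, α n * pairWeight a b n c d := by
  have hind : ∀ u v : ℝ, IntegrableOn ((Ioo u v).indicator fun _ => (1 : ℝ)) (Ioo c d) :=
    fun u v => (integrable_const 1).indicator measurableSet_Ioo
  have hvol : ∀ u v : ℝ, ∫ x in Ioo c d, (Ioo u v).indicator (fun _ => (1 : ℝ)) x =
      volume.real (Ioo c d ∩ Ioo u v) := fun u v => by
    rw [← inter_comm, ← measureReal_restrict_apply measurableSet_Ioo]
    exact integral_indicator_one measurableSet_Ioo
  rw [integral_finsetSum s fun n _ => by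
    exact (((hind _ _).sub (hind _ _)).div_const _).const_mul (α n)]
  refine sum_congr rfl fun n _ => ?_
  rw [integral_const_mul, integral_div, integral_sub (hind _ _) (hind _ _), hvol, hvol,
    pairWeight]

section SuccessiveIntervals

variable {a b : ℕ → ℝ}

theorem right_le_left_of_lt (hlt : ∀ n, a n < b n) (hsucc : ∀ n, b n ≤ a (n + 1)) {k l : ℕ}
    (h : k < l) : b k ≤ a l :=
  (hsucc k).trans <| monotone_nat_of_le_succ (fun n => (hlt n).le.trans (hsucc n)) h

theorem disjoint_Ioo_of_ne (hlt : ∀ n, a n < b n) (hsucc : ∀ n, b n ≤ a (n + 1)) {k l : ℕ}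
    (h : k ≠ l) : Disjoint (Ioo (a k) (b k)) (Ioo (a l) (b l)) := by
  refine disjoint_left.2 fun x hk hl => ?_
  rcases h.lt_or_gt with h | h
  · linarith [right_le_left_of_lt hlt hsucc h, hk.2, hl.1]
  · linarith [right_le_left_of_lt hlt hsucc h, hk.1, hl.2]

theorem eq_of_mem_pair_hull (hlt : ∀ n, a n < b n) (hsucc : ∀ n, b n ≤ a (n + 1))
    {n₁ n₂ : ℕ} {x : ℝ} (h₁ : x ∈ Ioo (a (2 * n₁)) (b (2 * n₁ + 1)))
    (h₂ : x ∈ Ioo (a (2 * n₂)) (b (2 * n₂ + 1))) : n₁ = n₂ := by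
  by_contra hne
  rcases Ne.lt_or_gt hne with h | h
  · linarith [right_le_left_of_lt hlt hsucc (show 2 * n₁ + 1 < 2 * n₂ by omega), h₁.2, h₂.1]
  · linarith [right_le_left_of_lt hlt hsucc (show 2 * n₂ + 1 < 2 * n₁ by omega), h₁.1, h₂.2]

theorem subsingleton_posPart_ne_zero (hlt : ∀ n, a n < b n) (hsucc : ∀ n, b n ≤ a (n + 1))
    {G : ℕ → ℝ} {x : ℝ}
    (hG : ∀ n, 0 < G n → x ∈ Ioo (a (2 * n)) (b (2 * n + 1))) :
    {n | (G n)⁺ ≠ 0}.Subsingleton := fun n₁ h₁ n₂ h₂ =>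
  eq_of_mem_pair_hull hlt hsucc (hG n₁ (posPart_pos_iff.1 ((posPart_nonneg _).lt_of_ne' h₁)))
    (hG n₂ (posPart_pos_iff.1 ((posPart_nonneg _).lt_of_ne' h₂)))

theorem mem_Ioo_of_pairWeight_pos (hlt : ∀ n, a n < b n) (hsucc : ∀ n, b n ≤ a (n + 1))
    (hlen : ∀ n, b (2 * n) - a (2 * n) = b (2 * n + 1) - a (2 * n + 1))
    {n : ℕ} {c d : ℝ} (h : 0 < pairWeight a b n c d) :
    d ∈ Ioo (a (2 * n)) (b (2 * n + 1)) := by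
  have hL : 0 < b (2 * n) - a (2 * n) := sub_pos.2 (hlt _)
  exact right_mem_Ioo_of_volume_real_inter_lt (hsucc _) (hlen n)
    (sub_pos.1 ((div_pos_iff_of_pos_right hL).1 h))

theorem mem_Ioo_of_pairWeight_neg (hlt : ∀ n, a n < b n) (hsucc : ∀ n, b n ≤ a (n + 1))
    (hlen : ∀ n, b (2 * n) - a (2 * n) = b (2 * n + 1) - a (2 * n + 1))
    {n : ℕ} {c d : ℝ} (h : pairWeight a b n c d < 0) :
    c ∈ Ioo (a (2 * n)) (b (2 * n + 1)) := by
  have hL : 0 < b (2 * n) - a (2 * n) := sub_pos.2 (hlt _)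
  exact left_mem_Ioo_of_volume_real_inter_lt (hsucc _) (hlen n)
    (sub_neg.1 (neg_of_div_neg_left h hL.le))

theorem pairWeight_le (hlt : ∀ n, a n < b n) {n : ℕ} {c d : ℝ} :
    pairWeight a b n c d ≤
      volume.real (Ioo c d ∩ Ioo (a (2 * n)) (b (2 * n))) / (b (2 * n) - a (2 * n)) := by
  rw [pairWeight]
  gcongr
  · exact (sub_pos.2 (hlt _)).le
  · exact sub_le_self _ measureReal_nonneg

theorem neg_pairWeight_le (hlt : ∀ n, a n < b n)
    (hlen : ∀ n, b (2 * n) - a (2 * n) = b (2 * n + 1) - a (2 * n + 1)) {n : ℕ} {c d : ℝ} :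
    -pairWeight a b n c d ≤ volume.real (Ioo c d ∩ Ioo (a (2 * n + 1)) (b (2 * n + 1))) /
      (b (2 * n + 1) - a (2 * n + 1)) := by
  rw [pairWeight, ← neg_div, neg_sub, ← hlen]
  gcongr
  · exact (sub_pos.2 (hlt _)).le
  · exact sub_le_self _ measureReal_nonneg

theorem norm_sum_pairWeight_smul_le (hlt : ∀ n, a n < b n) (hsucc : ∀ n, b n ≤ a (n + 1))
    (hlen : ∀ n, b (2 * n) - a (2 * n) = b (2 * n + 1) - a (2 * n + 1))
    {X : Type*} [NormedAddCommGroup X] [NormedSpace ℝ X] {e : ℕ → X} (he : IsSymmetricBasis e)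
    (s : Finset ℕ) (α : ℕ → ℝ) {m : ℕ} {c d : Fin m → ℝ}
    (hdisj : Pairwise fun i j => Disjoint (Ioo (c i) (d i)) (Ioo (c j) (d j))) :
    ‖∑ j : Fin m, (∑ n ∈ s, α n * pairWeight a b n (c j) (d j)) • e j‖ ≤
      2 * ‖∑ n ∈ s, α n • e n‖ := by
  set G : Fin m → ℕ → ℝ := fun j n => pairWeight a b n (c j) (d j)
  have hP := he.norm_sum_weighted_le Fin.val_injective (P := fun j n => (G j n)⁺)
    (fun _ _ => posPart_nonneg _)
    (fun n => sum_posPart_le_one hdisj (fun _ => measurableSet_Ioo) (hlt _)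
      fun _ => pairWeight_le hlt)
    (fun j => subsingleton_posPart_ne_zero hlt hsucc fun _ =>
      mem_Ioo_of_pairWeight_pos hlt hsucc hlen) s α
  have hQ := he.norm_sum_weighted_le Fin.val_injective (P := fun j n => (-G j n)⁺)
    (fun _ _ => posPart_nonneg _)
    (fun n => sum_posPart_le_one hdisj (fun _ => measurableSet_Ioo) (hlt _)
      fun _ => neg_pairWeight_le hlt hlen)
    (fun j => subsingleton_posPart_ne_zero hlt hsucc fun _ h =>
      mem_Ioo_of_pairWeight_neg hlt hsucc hlen (neg_pos.1 h)) s α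
  have hsplit : ∑ j : Fin m, (∑ n ∈ s, α n * G j n) • e j =
      ∑ j : Fin m, (∑ n ∈ s, α n * (G j n)⁺) • e j -
        ∑ j : Fin m, (∑ n ∈ s, α n * (-G j n)⁺) • e j := by
    simp only [← sum_sub_distrib, ← sub_smul, ← mul_sub, posPart_neg, posPart_sub_negPart]
  rw [hsplit]
  linarith [norm_sub_le (∑ j : Fin m, (∑ n ∈ s, α n * (G j n)⁺) • e j)
    (∑ j : Fin m, (∑ n ∈ s, α n * (-G j n)⁺) • e j)]

theorem pairWeight_self (hlt : ∀ n, a n < b n) (hsucc : ∀ n, b n ≤ a (n + 1)) (n k : ℕ) :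
    pairWeight a b n (a (2 * k)) (b (2 * k)) = if n = k then 1 else 0 := by
  have hdisj : ∀ {i j : ℕ}, i ≠ j → Ioo (a i) (b i) ∩ Ioo (a j) (b j) = ∅ :=
    fun h => (disjoint_Ioo_of_ne hlt hsucc h).inter_eq
  split_ifs with h
  · subst h
    have hL : 0 < b (2 * n) - a (2 * n) := sub_pos.2 (hlt _)
    rw [pairWeight, inter_self, hdisj (by omega), measureReal_empty, Real.volume_real_Ioo,
      max_eq_left hL.le, sub_zero, div_self hL.ne']
  · rw [pairWeight, hdisj (by omega), hdisj (by omega), measureReal_empty, sub_zero, zero_div]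

theorem sum_pairWeight_self_smul (hlt : ∀ n, a n < b n) (hsucc : ∀ n, b n ≤ a (n + 1))
    {X : Type*} [AddCommMonoid X] [Module ℝ X] (e : ℕ → X) (s : Finset ℕ) (α : ℕ → ℝ) :
    ∑ j : Fin (s.sup id + 1), (∑ n ∈ s, α n * pairWeight a b n (a (2 * j)) (b (2 * j))) • e j =
      ∑ n ∈ s, α n • e n := by
  have hs : s ⊆ range (s.sup id + 1) := fun n hn =>
    mem_range.2 (Nat.lt_succ_of_le (le_sup (f := id) hn))
  simp only [pairWeight_self hlt hsucc, mul_ite, mul_one, mul_zero, sum_ite_eq', ite_smul,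
    zero_smul]
  rw [Fin.sum_univ_eq_sum_range (fun k => if k ∈ s then α k • e k else 0), sum_ite_mem,
    Finset.inter_eq_right.2 hs]

end SuccessiveIntervals

section JFNorm

variable {X : Type*} [NormedAddCommGroup X] [NormedSpace ℝ X] {e : ℕ → X} {f : ℝ → ℝ}
  {I : ℝ → ℝ → ℝ} {B : ℝ}

theorem JFNorm1_le_s8 (hI : ∀ c d, ∫ x in Ioo c d, f x = I c d)
    (h : ∀ (m : ℕ) (c d : Fin m → ℝ),
      (Pairwise fun i j => Disjoint (Ioo (c i) (d i)) (Ioo (c j) (d j))) →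
        ‖∑ j : Fin m, I (c j) (d j) • e j‖ ≤ B) :
    JFNorm1 e f ≤ B :=
  csSup_le ⟨0, 0, finZeroElim, finZeroElim, finZeroElim, fun i => i.elim0, by simp⟩
    fun _ ⟨m, c, d, _, hdisj, hr⟩ => hr ▸ (by simpa only [hI] using h m c d hdisj)

theorem le_JFNorm1 (hI : ∀ c d, ∫ x in Ioo c d, f x = I c d)
    (h : ∀ (m : ℕ) (c d : Fin m → ℝ),
      (Pairwise fun i j => Disjoint (Ioo (c i) (d i)) (Ioo (c j) (d j))) →
        ‖∑ j : Fin m, I (c j) (d j) • e j‖ ≤ B)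
    {m : ℕ} {c d : Fin m → ℝ} (hcd : ∀ j, 0 ≤ c j ∧ c j < d j ∧ d j ≤ 1)
    (hdisj : Pairwise fun i j => Disjoint (Ioo (c i) (d i)) (Ioo (c j) (d j))) :
    ‖∑ j : Fin m, I (c j) (d j) • e j‖ ≤ JFNorm1 e f := by
  have hnorm : ‖∑ j : Fin m, (∫ x in Ioo (c j) (d j), f x) • e j‖ =
      ‖∑ j : Fin m, I (c j) (d j) • e j‖ := by
    simp only [hI]
  exact hnorm ▸ le_csSup ⟨B, fun _ ⟨m, c, d, _, hdisj, hr⟩ =>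
    hr ▸ (by simpa only [hI] using h m c d hdisj)⟩ ⟨m, c, d, hcd, hdisj, rfl⟩

end JFNorm

/-- Let `(A_n)` be successive pairwise disjoint subintervals of `[0,1]`
(`A_n = (a_n, b_n)` with `b_n ≤ a_{n+1}`), with `μ(A_{2n}) = μ(A_{2n+1})`, and let
`y_n = χ_{A_{2n}} - χ_{A_{2n+1}}`.  Then `(y_n/μ(A_{2n}))_n` is 2-equivalent to `(e_n)`:
`‖Σ α_n e_n‖_X ≤ ‖Σ α_n y_n/μ(A_{2n})‖_{JF_X} ≤ 2‖Σ α_n e_n‖_X` for all finitely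
supported scalars. -/
theorem normalized_differences_two_equivalent_to_basis
    {X : Type*} [NormedAddCommGroup X] [NormedSpace ℝ X]
    (e : ℕ → X) (he : IsSymmetricBasis e)
    (a b : ℕ → ℝ)
    (h0 : ∀ n, 0 ≤ a n) (h1 : ∀ n, b n ≤ 1)
    (hlt : ∀ n, a n < b n) (hsucc : ∀ n, b n ≤ a (n + 1))
    (hlen : ∀ n, b (2 * n) - a (2 * n) = b (2 * n + 1) - a (2 * n + 1))
    (s : Finset ℕ) (α : ℕ → ℝ) :
    ‖∑ n ∈ s, α n • e n‖ ≤
        JFNorm1 e (fun x => ∑ n ∈ s,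
          α n * ((Set.indicator (Set.Ioo (a (2 * n)) (b (2 * n))) (fun _ => (1 : ℝ)) x -
              Set.indicator (Set.Ioo (a (2 * n + 1)) (b (2 * n + 1))) (fun _ => (1 : ℝ)) x) /
            (b (2 * n) - a (2 * n)))) ∧
      JFNorm1 e (fun x => ∑ n ∈ s,
          α n * ((Set.indicator (Set.Ioo (a (2 * n)) (b (2 * n))) (fun _ => (1 : ℝ)) x -
              Set.indicator (Set.Ioo (a (2 * n + 1)) (b (2 * n + 1))) (fun _ => (1 : ℝ)) x) /
            (b (2 * n) - a (2 * n)))) ≤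
        2 * ‖∑ n ∈ s, α n • e n‖ := by
  have hint := setIntegral_eq_sum_pairWeight a b s α
  have hbound := fun m (c d : Fin m → ℝ) hdisj =>
    norm_sum_pairWeight_smul_le hlt hsucc hlen he s α (c := c) (d := d) hdisj
  refine ⟨?_, JFNorm1_le_s8 hint hbound⟩
  have hwitness := le_JFNorm1 hint hbound (c := fun j : Fin (s.sup id + 1) => a (2 * j))
    (d := fun j => b (2 * j)) (fun j => ⟨h0 _, hlt _, h1 _⟩)
    fun i j hij => disjoint_Ioo_of_ne hlt hsucc (by omega)
  rwa [sum_pairWeight_self_smul hlt hsucc] at hwitness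

end
end

section
/- Let X be a real Banach space with a normalized 1-symmetric basis (e_n). For f ∈ L¹(0,1) let F(t) = ∫_0^t f dμ be its indefinite integral. Then ‖f‖_{JF_X} = ‖F‖_{V_X}; that is, the supremum over all finite families of pairwise disjoint open subintervals I_1,…,I_m of (0,1) of ‖Σ_j (∫_{I_j} f dμ) e_j‖_X equals the supremum over all partitions 0 = t_0 < t_1 < … < t_n = 1 of ‖Σ_{i=0}^{n−1} (F(t_{i+1}) − F(t_i)) e_i‖_X. Consequently the Volterra operator f ↦ F extends to an isometry of JF_X onto V_X^0. -/
/-!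
Each partition `0 = t₀ < ⋯ < tₙ = 1` yields the disjoint intervals `(tᵢ, tᵢ₊₁)`, whose
integrals are exactly the increments `F(tᵢ₊₁) - F(tᵢ)`; so every `V_X`-sum is a `JF_X`-sum.
Conversely, the endpoints of finitely many disjoint intervals, together with `0` and `1`, form a
partition in which each interval is a single segment. By 1-symmetry the coefficients may be moved
to the positions of their segments, and a 1-symmetric basis is 1-unconditional (average the
vector with its sign flip off the chosen coordinates), so adding the remaining segments can only
increase the norm. Thus each set dominates the other and the suprema agree, bounded or not.
-/

open MeasureTheory

noncomputable section

/-- The set of `X`-variations `α_X(g,P) = ‖Σ_i (g(t_{i+1}) - g(t_i)) e_i‖_X` of `g`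
over all partitions `P = {0 = t_0 < t_1 < … < t_n = 1}` of `[0,1]`. -/
def VXSet {X : Type*} [NormedAddCommGroup X] [NormedSpace ℝ X]
    (e : ℕ → X) (g : ℝ → ℝ) : Set ℝ :=
  { r | ∃ (n : ℕ) (t : Fin (n + 1) → ℝ), StrictMono t ∧ t 0 = 0 ∧ t (Fin.last n) = 1 ∧
      r = ‖∑ i : Fin n, (g (t i.succ) - g (t i.castSucc)) • e (i : ℕ)‖ }

/-- The `V_X` norm (total `X`-variation) of `g : [0,1] → ℝ`. -/
def VXNorm {X : Type*} [NormedAddCommGroup X] [NormedSpace ℝ X]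
    (e : ℕ → X) (g : ℝ → ℝ) : ℝ :=
  sSup (VXSet e g)

open Set

section Symmetric

variable {X : Type*} [NormedAddCommGroup X] [NormedSpace ℝ X]

def IsOneSymmetric (e : ℕ → X) : Prop :=
  ∀ (a : ℕ →₀ ℝ) (π : Equiv.Perm ℕ) (ε : ℕ → ℝ), (∀ n, ε n = 1 ∨ ε n = -1) →
    ‖a.sum fun n c => (ε n * c) • e (π n)‖ = ‖a.sum fun n c => c • e n‖

theorem IsSymmetricBasis.isOneSymmetric {e : ℕ → X} (he : IsSymmetricBasis e) :
    IsOneSymmetric e :=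
  he.2.2

namespace IsOneSymmetric

variable {e : ℕ → X}

theorem norm_sum_fin (he : IsOneSymmetric e) {n : ℕ} (d : Fin n → ℝ) (π : Equiv.Perm ℕ)
    {ε : ℕ → ℝ} (hε : ∀ k, ε k = 1 ∨ ε k = -1) :
    ‖∑ i : Fin n, (ε i * d i) • e (π i)‖ = ‖∑ i : Fin n, d i • e i‖ := by
  simpa [Finsupp.sum_embDomain, Finsupp.sum_fintype] using
    he (Finsupp.embDomain Fin.valEmbedding (Finsupp.equivFunOnFinite.symm d)) π ε hε

theorem norm_sum_comp_injective (he : IsOneSymmetric e) {m : ℕ} (c : Fin m → ℝ)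
    {ι : Fin m → ℕ} (hι : Function.Injective ι) :
    ‖∑ j : Fin m, c j • e (ι j)‖ = ‖∑ j : Fin m, c j • e j‖ := by
  obtain ⟨π, hπ⟩ := Equiv.Perm.exists_extending_pair _ ι Fin.val_injective hι
  simpa [hπ] using he.norm_sum_fin c π (ε := 1) (fun _ => Or.inl rfl)

theorem norm_sum_subset_le (he : IsOneSymmetric e) {n : ℕ} (d : Fin n → ℝ)
    (S : Finset (Fin n)) :
    ‖∑ i ∈ S, d i • e i‖ ≤ ‖∑ i : Fin n, d i • e i‖ := by
  classical
  set ε : ℕ → ℝ := fun k => if k ∈ S.map Fin.valEmbedding then 1 else -1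
  have hε : ∀ k, ε k = 1 ∨ ε k = -1 := fun k => by unfold ε; split_ifs <;> simp
  have hflip : ‖∑ i : Fin n, (ε i * d i) • e i‖ = ‖∑ i : Fin n, d i • e i‖ := by
    simpa using he.norm_sum_fin d 1 hε
  have hsum : (∑ i : Fin n, d i • e i) + ∑ i : Fin n, (ε i * d i) • e i
      = (2 : ℝ) • ∑ i ∈ S, d i • e i := by
    rw [← Finset.sum_add_distrib, Finset.smul_sum, ← Fintype.sum_ite_mem S]
    refine Finset.sum_congr rfl fun i _ => ?_
    by_cases hi : i ∈ S <;> simp [ε, hi, Fin.val_inj, two_smul]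
  calc ‖∑ i ∈ S, d i • e i‖ = 2⁻¹ * ‖(2 : ℝ) • ∑ i ∈ S, d i • e i‖ := by
        rw [norm_smul, Real.norm_two]; ring
    _ ≤ 2⁻¹ * (‖∑ i : Fin n, d i • e i‖ + ‖∑ i : Fin n, (ε i * d i) • e i‖) := by
        rw [← hsum]; gcongr; exact norm_add_le _ _
    _ = ‖∑ i : Fin n, d i • e i‖ := by rw [hflip]; ring

theorem norm_sum_comp_injective_le (he : IsOneSymmetric e) {m n : ℕ} (d : Fin n → ℝ)
    {ι : Fin m → Fin n} (hι : Function.Injective ι) :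
    ‖∑ j : Fin m, d (ι j) • e j‖ ≤ ‖∑ i : Fin n, d i • e i‖ :=
  calc ‖∑ j : Fin m, d (ι j) • e j‖ = ‖∑ j : Fin m, d (ι j) • e (ι j)‖ :=
        (he.norm_sum_comp_injective _ (Fin.val_injective.comp hι)).symm
    _ = ‖∑ i ∈ Finset.univ.image ι, d i • e i‖ := by rw [Finset.sum_image hι.injOn]
    _ ≤ ‖∑ i : Fin n, d i • e i‖ := he.norm_sum_subset_le d _

end IsOneSymmetric

end Symmetric

theorem Finset.exists_strictMono_fin_range {α : Type*} [LinearOrder α] {s : Finset α}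
    (hs : s.Nonempty) : ∃ (n : ℕ) (t : Fin (n + 1) → α), StrictMono t ∧ Set.range t = s := by
  obtain ⟨n, hn⟩ := Nat.exists_eq_succ_of_ne_zero hs.card_pos.ne'
  exact ⟨n, s.orderEmbOfFin hn, (s.orderEmbOfFin hn).strictMono, s.range_orderEmbOfFin hn⟩

theorem StrictMono.exists_castSucc_succ_eq_of_forall_notMem_Ioo {α : Type*} [Preorder α] {n : ℕ}
    {t : Fin (n + 1) → α} (ht : StrictMono t) {k l : Fin (n + 1)} (hkl : t k < t l)
    (hgap : ∀ i, t i ∉ Ioo (t k) (t l)) : ∃ i : Fin n, i.castSucc = k ∧ i.succ = l := by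
  have hkl' : k < l := ht.lt_iff_lt.mp hkl
  have hk : (k : ℕ) < n := by omega
  refine ⟨⟨k, hk⟩, rfl, Fin.ext ?_⟩
  by_contra hne
  have hl : (k : ℕ) + 1 < l := by simp only [Fin.val_succ] at hne; omega
  exact hgap ⟨k + 1, by omega⟩ ⟨ht (Fin.mk_lt_mk.2 (by omega)), ht (Fin.mk_lt_mk.2 hl)⟩

theorem Monotone.pairwise_disjoint_Ioo_castSucc_succ {α : Type*} [Preorder α] {n : ℕ}
    {t : Fin (n + 1) → α} (ht : Monotone t) :
    Pairwise fun i j : Fin n =>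
      Disjoint (Ioo (t i.castSucc) (t i.succ)) (Ioo (t j.castSucc) (t j.succ)) := by
  refine (pairwise_disjoint_on fun i : Fin n => Ioo (t i.castSucc) (t i.succ)).2
    fun i j hij => disjoint_left.2 fun x hxi hxj => ?_
  exact (hxi.2.trans_le (ht (Fin.succ_le_castSucc_iff.2 hij))).not_gt hxj.1

theorem setIntegral_Ioo_eq_sub {f : ℝ → ℝ} {c d a b : ℝ} (hf : IntegrableOn f (Ioo c d))
    (hca : c ≤ a) (hab : a ≤ b) (hbd : b ≤ d) :
    ∫ x in Ioo a b, f x = (∫ x in Ioo c b, f x) - ∫ x in Ioo c a, f x := by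
  have hint : ∀ {u v}, c ≤ u → u ≤ v → v ≤ d → IntervalIntegrable f volume u v :=
    fun hu huv hv => (intervalIntegrable_iff_integrableOn_Ioo_of_le huv).2
      (hf.mono_set (Ioo_subset_Ioo hu hv))
  simp only [← integral_Ioc_eq_integral_Ioo, ← intervalIntegral.integral_of_le, hab, hca,
    hca.trans hab]
  exact (intervalIntegral.integral_interval_sub_left (hint le_rfl (hca.trans hab) hbd)
    (hint le_rfl hca (hab.trans hbd))).symm

theorem endpoints_notMem_Ioo_of_pairwise_disjoint {α ι : Type*} [LinearOrder α]
    [DenselyOrdered α] {a b : ι → α} (hab : ∀ j, a j < b j)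
    (hdisj : Pairwise fun i j => Disjoint (Ioo (a i) (b i)) (Ioo (a j) (b j))) (k j : ι) :
    a k ∉ Ioo (a j) (b j) ∧ b k ∉ Ioo (a j) (b j) := by
  obtain rfl | hkj := eq_or_ne k j
  · simp
  have h : Disjoint (Ioo (a k) (b k)) (Ioo (a j) (b j)) := hdisj hkj
  rw [Ioo_disjoint_Ioo, min_le_iff, le_max_iff, le_max_iff] at h
  have := hab k
  constructor <;> rintro ⟨h₁, h₂⟩ <;> grind

theorem exists_partition_of_pairwise_disjoint_Ioo {α : Type*} [LinearOrder α] [DenselyOrdered α]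
    {u v : α} (huv : u ≤ v) {m : ℕ} {a b : Fin m → α}
    (hab : ∀ j, u ≤ a j ∧ a j < b j ∧ b j ≤ v)
    (hdisj : Pairwise fun i j => Disjoint (Ioo (a i) (b i)) (Ioo (a j) (b j))) :
    ∃ (n : ℕ) (t : Fin (n + 1) → α) (ι : Fin m → Fin n), StrictMono t ∧ t 0 = u ∧
      t (Fin.last n) = v ∧ Function.Injective ι ∧
      ∀ j, t (ι j).castSucc = a j ∧ t (ι j).succ = b j := by
  classical
  set s : Finset α := {u, v} ∪ Finset.univ.image a ∪ Finset.univ.image b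
  have hs : ∀ {x}, x ∈ s ↔ x = u ∨ x = v ∨ (∃ k, a k = x) ∨ ∃ k, b k = x := by
    simp [s]
  have hs_bounds : ∀ x ∈ s, u ≤ x ∧ x ≤ v := by
    intro x hx
    rcases hs.1 hx with rfl | rfl | ⟨k, rfl⟩ | ⟨k, rfl⟩ <;> grind
  have hend := endpoints_notMem_Ioo_of_pairwise_disjoint (fun j => (hab j).2.1) hdisj
  have hs_gap : ∀ x ∈ s, ∀ j, x ∉ Ioo (a j) (b j) := by
    intro x hx j hxj
    rcases hs.1 hx with rfl | rfl | ⟨k, rfl⟩ | ⟨k, rfl⟩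
    · exact (hab j).1.not_gt hxj.1
    · exact (hab j).2.2.not_gt hxj.2
    · exact (hend k j).1 hxj
    · exact (hend k j).2 hxj
  obtain ⟨n, t, ht, hrange⟩ := Finset.exists_strictMono_fin_range ⟨u, hs.2 (Or.inl rfl)⟩
  have hmem : ∀ {x}, x ∈ s ↔ ∃ i, t i = x := fun {x} => by
    rw [← Finset.mem_coe, ← hrange, mem_range]
  have ht0 : t 0 = u := by
    obtain ⟨i, hi⟩ := hmem.1 (hs.2 (Or.inl rfl))
    exact le_antisymm (hi ▸ ht.monotone (Fin.zero_le i)) (hs_bounds _ (hmem.2 ⟨0, rfl⟩)).1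
  have htl : t (Fin.last n) = v := by
    obtain ⟨i, hi⟩ := hmem.1 (hs.2 (Or.inr (Or.inl rfl)))
    exact le_antisymm (hs_bounds _ (hmem.2 ⟨_, rfl⟩)).2 (hi ▸ ht.monotone (Fin.le_last i))
  have hseg : ∀ j, ∃ i : Fin n, t i.castSucc = a j ∧ t i.succ = b j := by
    intro j
    obtain ⟨k, hk⟩ := hmem.1 (hs.2 (Or.inr (Or.inr (Or.inl ⟨j, rfl⟩))))
    obtain ⟨l, hl⟩ := hmem.1 (hs.2 (Or.inr (Or.inr (Or.inr ⟨j, rfl⟩))))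
    obtain ⟨i, rfl, rfl⟩ := ht.exists_castSucc_succ_eq_of_forall_notMem_Ioo
      (hk ▸ hl ▸ (hab j).2.1) (fun i => hk ▸ hl ▸ hs_gap _ (hmem.2 ⟨i, rfl⟩) j)
    exact ⟨i, hk, hl⟩
  choose ι hι using hseg
  refine ⟨n, t, ι, ht, ht0, htl, fun j j' hjj' => ?_, hι⟩
  by_contra hne
  have hself : Disjoint (Ioo (a j) (b j)) (Ioo (a j') (b j')) := hdisj hne
  rw [← (hι j).1, ← (hι j).2, ← (hι j').1, ← (hι j').2, hjj', disjoint_self, bot_eq_empty,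
    Ioo_eq_empty_iff] at hself
  exact hself (ht (Fin.castSucc_lt_succ))

section Norms

variable {X : Type*} [NormedAddCommGroup X] [NormedSpace ℝ X]

def JFSet (e : ℕ → X) (f : ℝ → ℝ) : Set ℝ :=
  { r | ∃ (m : ℕ) (a b : Fin m → ℝ),
    (∀ j, 0 ≤ a j ∧ a j < b j ∧ b j ≤ 1) ∧
    (Pairwise fun i j => Disjoint (Ioo (a i) (b i)) (Ioo (a j) (b j))) ∧
    r = ‖∑ j : Fin m, (∫ x in Ioo (a j) (b j), f x) • e j‖ }

theorem VXSet_indefiniteIntegral_subset_JFSet (e : ℕ → X) {f : ℝ → ℝ}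
    (hf : IntegrableOn f (Ioo 0 1)) :
    VXSet e (fun t => ∫ x in Ioo 0 t, f x) ⊆ JFSet e f := by
  rintro r ⟨n, t, ht, ht0, htl, rfl⟩
  have ht_mem : ∀ i, 0 ≤ t i ∧ t i ≤ 1 := fun i =>
    ⟨ht0 ▸ ht.monotone (Fin.zero_le i), htl ▸ ht.monotone (Fin.le_last i)⟩
  refine ⟨n, fun i => t i.castSucc, fun i => t i.succ,
    fun i => ⟨(ht_mem _).1, ht Fin.castSucc_lt_succ, (ht_mem _).2⟩,
    ht.monotone.pairwise_disjoint_Ioo_castSucc_succ, ?_⟩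
  congr 1
  refine Finset.sum_congr rfl fun i _ => ?_
  rw [setIntegral_Ioo_eq_sub hf (ht_mem _).1 (ht Fin.castSucc_lt_succ).le (ht_mem _).2]

theorem exists_mem_VXSet_ge_of_mem_JFSet {e : ℕ → X} (he : IsOneSymmetric e) {f : ℝ → ℝ}
    (hf : IntegrableOn f (Ioo 0 1)) {r : ℝ} (hr : r ∈ JFSet e f) :
    ∃ s ∈ VXSet e (fun t => ∫ x in Ioo 0 t, f x), r ≤ s := by
  obtain ⟨m, a, b, hab, hdisj, rfl⟩ := hr
  obtain ⟨n, t, ι, ht, ht0, htl, hι, hιab⟩ :=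
    exists_partition_of_pairwise_disjoint_Ioo zero_le_one hab hdisj
  refine ⟨_, ⟨n, t, ht, ht0, htl, rfl⟩, ?_⟩
  have hcoeff : ∀ j, ∫ x in Ioo (a j) (b j), f x =
      (∫ x in Ioo 0 (t (ι j).succ), f x) - ∫ x in Ioo 0 (t (ι j).castSucc), f x := fun j => by
    rw [(hιab j).1, (hιab j).2]
    exact setIntegral_Ioo_eq_sub hf (hab j).1 (hab j).2.1.le (hab j).2.2
  simp only [hcoeff]
  exact he.norm_sum_comp_injective_le
    (fun i => (∫ x in Ioo 0 (t i.succ), f x) - ∫ x in Ioo 0 (t i.castSucc), f x) hι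

end Norms

/-- For `f ∈ L¹(0,1)` with indefinite integral `F(t) = ∫_0^t f dμ`,
`‖f‖_{JF_X} = ‖F‖_{V_X}`: the supremum of `‖Σ_j (∫_{I_j} f) e_j‖` over finite families
of pairwise disjoint open subintervals of `(0,1)` equals the supremum of
`‖Σ_i (F(t_{i+1}) - F(t_i)) e_i‖` over partitions `0 = t_0 < … < t_n = 1`.
Consequently the Volterra operator extends to an isometry of `JF_X` onto `V_X^0`. -/
theorem JFX_norm_eq_VX_norm_of_indefinite_integral
    {X : Type*} [NormedAddCommGroup X] [NormedSpace ℝ X]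
    (e : ℕ → X) (he : IsSymmetricBasis e)
    (f : ℝ → ℝ) (hf : IntegrableOn f (Set.Ioo (0 : ℝ) 1)) :
    JFNorm1 e f = VXNorm e (fun t => ∫ x in Set.Ioo (0 : ℝ) t, f x) := by
  show sSup (JFSet e f) = sSup (VXSet e _)
  exact csSup_eq_csSup_of_forall_exists_le
    (fun r hr => exists_mem_VXSet_ge_of_mem_JFSet he.isOneSymmetric hf hr)
    (fun r hr => ⟨r, VXSet_indefiniteIntegral_subset_JFSet e hf hr, le_rfl⟩)

end
end
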